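/- arXiv:1704.08015 — 11 statements merged into one kernel-verified Lean document; each statement's English description precedes it below -/
import Mathlib

section
/- For every x ∈ ℝ and every h > 0, |∫_ℝ K(z) f(x − h z) dz − f(x)| ≤ (M/2) · h² · ∫_ℝ z² K(z) dz. (The quantity ∫_ℝ K(z) f(x − h z) dz is the expectation of the naive kernel density estimator f̂(x) = (1/(nh)) Σᵢ K((x − Xᵢ)/h) when the Xᵢ have density f; hence the interior bias of f̂ is O(h²).) -/
open MeasureTheory Filter Topology

/-!
Subtract from `f (x - h z)` its first-order Taylor polynomial `f x - h z f'(x)`. Against the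
kernel, the constant term integrates to `f x` since `∫ K = 1`, and the linear term vanishes since
the first moment of a symmetric kernel is zero. What remains is the Taylor remainder, bounded by
`(M/2) h² z²` because `f'` is `M`-Lipschitz, and integrating this bound against `K ≥ 0` gives
`(M/2) h² ∫ z² K`.
-/

theorem abs_sub_sub_deriv_mul_le {f : ℝ → ℝ} {M a b : ℝ} (hf : Differentiable ℝ f)
    (hf' : Continuous (deriv f)) (hlip : ∀ t, |deriv f t - deriv f a| ≤ M * |t - a|) :
    |f b - f a - deriv f a * (b - a)| ≤ M / 2 * (b - a) ^ 2 := by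
  set γ : ℝ → ℝ := fun s => a + s * (b - a) with hγ
  have hγ_deriv : ∀ s, HasDerivAt (f ∘ γ) (deriv f (γ s) * (b - a)) s := fun s =>
    (hf (γ s)).hasDerivAt.comp s ((hasDerivAt_mul_const (b - a)).const_add a)
  have hγ_cont : Continuous fun s => deriv f (γ s) * (b - a) := by fun_prop
  have hremainder : f b - f a - deriv f a * (b - a)
      = ∫ s in (0 : ℝ)..1, (deriv f (γ s) - deriv f a) * (b - a) := by
    simp_rw [sub_mul]
    rw [intervalIntegral.integral_sub (hγ_cont.intervalIntegrable 0 1) intervalIntegrable_const,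
      intervalIntegral.integral_eq_sub_of_hasDerivAt (fun s _ => hγ_deriv s)
        (hγ_cont.intervalIntegrable 0 1)]
    simp [hγ]
  have hpointwise : ∀ s ∈ Set.Ioc (0 : ℝ) 1,
      ‖(deriv f (γ s) - deriv f a) * (b - a)‖ ≤ M * (b - a) ^ 2 * s := by
    intro s hs
    have hγa : |γ s - a| = s * |b - a| := by
      simp [hγ, abs_mul, abs_of_pos hs.1]
    calc ‖(deriv f (γ s) - deriv f a) * (b - a)‖
        = |deriv f (γ s) - deriv f a| * |b - a| := by rw [Real.norm_eq_abs, abs_mul]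
      _ ≤ M * |γ s - a| * |b - a| := by gcongr; exact hlip _
      _ = M * (b - a) ^ 2 * s := by rw [hγa, ← sq_abs (b - a)]; ring
  calc |f b - f a - deriv f a * (b - a)|
      ≤ ∫ s in (0 : ℝ)..1, M * (b - a) ^ 2 * s := by
        rw [hremainder, ← Real.norm_eq_abs]
        exact intervalIntegral.norm_integral_le_of_norm_le zero_le_one
          (ae_of_all _ hpointwise) ((continuous_const.mul continuous_id).intervalIntegrable 0 1)
    _ = M / 2 * (b - a) ^ 2 := by
        rw [intervalIntegral.integral_const_mul, integral_id]; ring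

section Kernel

variable {K : ℝ → ℝ}

theorem integral_mul_eq_zero_of_even (hK : ∀ z, K (-z) = K z) : ∫ z, z * K z = 0 := by
  have hodd : ∫ z, -z * K (-z) = -∫ z, z * K z := by
    simp_rw [hK, neg_mul, integral_neg]
  linarith [integral_neg_eq_self (fun z => z * K z) volume]

theorem integrable_mul_of_integrable_sq_mul (hK : Integrable K)
    (hK2 : Integrable fun z => z ^ 2 * K z) : Integrable fun z => z * K z := by
  refine (hK.norm.add hK2.norm).mono' (aestronglyMeasurable_id.mul hK.1) (ae_of_all _ fun z => ?_)
  have hz : |z| ≤ 1 + z ^ 2 := by nlinarith [abs_nonneg z, sq_abs z, sq_nonneg (|z| - 1)]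
  simp only [Real.norm_eq_abs, abs_mul, Pi.add_apply, abs_sq]
  nlinarith [mul_le_mul_of_nonneg_right hz (abs_nonneg (K z))]

theorem abs_integral_mul_sub_le_of_abs_sub_le {g : ℝ → ℝ} {c d C : ℝ}
    (hK0 : ∀ z, 0 ≤ K z) (hK : Integrable K) (hK1 : ∫ z, K z = 1)
    (hKmom1 : ∫ z, z * K z = 0)
    (hK2 : Integrable fun z => z ^ 2 * K z) (hg : AEStronglyMeasurable g)
    (hquad : ∀ z, |g z - c - d * z| ≤ C * z ^ 2) :
    |(∫ z, K z * g z) - c| ≤ C * ∫ z, z ^ 2 * K z := by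
  set r : ℝ → ℝ := fun z => g z - c - d * z
  have hr_le : ∀ z, ‖K z * r z‖ ≤ C * (z ^ 2 * K z) := fun z => by
    rw [Real.norm_eq_abs, abs_mul, abs_of_nonneg (hK0 z)]
    nlinarith [mul_le_mul_of_nonneg_left (hquad z) (hK0 z)]
  have hr_meas : AEStronglyMeasurable r :=
    (hg.sub aestronglyMeasurable_const).sub
      (continuous_const.mul continuous_id).aestronglyMeasurable
  have hr : Integrable fun z => K z * r z :=
    (hK2.const_mul C).mono' (hK.1.mul hr_meas) (ae_of_all _ hr_le)
  have hK_const : Integrable fun z => c * K z := hK.const_mul c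
  have hK_lin : Integrable fun z => d * (z * K z) :=
    (integrable_mul_of_integrable_sq_mul hK hK2).const_mul d
  have hK_affine : Integrable fun z => c * K z + d * (z * K z) := hK_const.add hK_lin
  have hsplit : ∫ z, K z * g z = c + ∫ z, K z * r z := by
    have : ∀ z, K z * g z = c * K z + d * (z * K z) + K z * r z := fun z => by ring
    rw [integral_congr_ae (ae_of_all _ this), integral_add hK_affine hr,
      integral_add hK_const hK_lin, integral_const_mul, integral_const_mul, hK1, hKmom1,
      mul_one, mul_zero, add_zero]
  rw [hsplit, add_sub_cancel_left, ← Real.norm_eq_abs, ← integral_const_mul]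
  exact norm_integral_le_of_norm_le (hK2.const_mul C) (ae_of_all _ hr_le)

end Kernel

theorem naive_density_interior_bias_general
    (K f : ℝ → ℝ) (M : ℝ)
    (hK0 : ∀ z, 0 ≤ K z) (hKint : Integrable K)
    (hK1 : (∫ z, K z) = 1) (hKsymm : ∀ z, K (-z) = K z)
    (hKmom2 : Integrable (fun z => z ^ 2 * K z))
    (hfdiff : Differentiable ℝ f)
    (hfdiff2 : Differentiable ℝ (deriv f))
    (hbound : ∀ y, |deriv (deriv f) y| ≤ M) :
    ∀ (x h : ℝ), 0 < h →
      |(∫ z, K z * f (x - h * z)) - f x| ≤ M / 2 * h ^ 2 * ∫ z, z ^ 2 * K z := by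
  intro x h _
  have hlip : ∀ t, |deriv f t - deriv f x| ≤ M * |t - x| := fun t => by
    simpa [Real.norm_eq_abs] using Convex.norm_image_sub_le_of_norm_deriv_le
      (fun y _ => hfdiff2 y) (fun y _ => hbound y) convex_univ (Set.mem_univ x) (Set.mem_univ t)
  have htaylor : ∀ z, |f (x - h * z) - f x - -(h * deriv f x) * z| ≤ M / 2 * h ^ 2 * z ^ 2 :=
    fun z => calc
      _ = |f (x - h * z) - f x - deriv f x * (x - h * z - x)| := by ring_nf
      _ ≤ M / 2 * (x - h * z - x) ^ 2 := abs_sub_sub_deriv_mul_le hfdiff hfdiff2.continuous hlip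
      _ = M / 2 * h ^ 2 * z ^ 2 := by ring
  exact abs_integral_mul_sub_le_of_abs_sub_le hK0 hKint hK1 (integral_mul_eq_zero_of_even hKsymm)
    hKmom2 (hfdiff.continuous.comp (by fun_prop)).aestronglyMeasurable htaylor

/-- Interior bias of the naive kernel density estimator is `O(h²)`:
for a kernel `K` (nonnegative, integrable, integrating to one, symmetric,
with finite second moment) and a twice differentiable density `f` with
second derivative bounded by `M`, the expectation
`∫ K(z) f(x − h z) dz` of the naive estimator differs from `f x` by at most
`(M/2) h² ∫ z² K(z) dz`. -/
theorem naive_density_interior_bias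
    (K f : ℝ → ℝ) (M : ℝ)
    (hK0 : ∀ z, 0 ≤ K z) (hKint : Integrable K)
    (hK1 : (∫ z, K z) = 1) (hKsymm : ∀ z, K (-z) = K z)
    (hKmom2 : Integrable (fun z => z ^ 2 * K z))
    (hfdiff : Differentiable ℝ f)
    (hfdiff2 : Differentiable ℝ (deriv f))
    (hM : 0 ≤ M)
    (hbound : ∀ y, |deriv (deriv f) y| ≤ M) :
    ∀ (x h : ℝ), 0 < h →
      |(∫ z, K z * f (x - h * z)) - f x| ≤ M / 2 * h ^ 2 * ∫ z, z ^ 2 * K z :=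
  naive_density_interior_bias_general K f M hK0 hKint hK1 hKsymm hKmom2 hfdiff hfdiff2 hbound
end

section
/- For every x ∈ ℝ and every h > 0, |∫_ℝ K(z) F(x − h z) dz − F(x)| ≤ (L/2) · h² · ∫_ℝ z² K(z) dz. (Hence the bias of the naive kernel distribution estimator F̂ is O(h²) at points where the density is smooth.) -/
open MeasureTheory Filter

/-!
Since `f` is `L`-Lipschitz, the first-order Taylor remainder of `F` satisfies
`|F (x + s) - F x - f x * s| ≤ L / 2 * s ^ 2`. Integrating `F (x - h z)` against `K`, the constant
term gives back `F x` because `∫ K = 1`, the linear term vanishes because `K` is even, and the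
remainder contributes at most `L / 2 * h ^ 2 * ∫ z ^ 2 K`.
-/

theorem abs_sub_sub_mul_le_of_lipschitz_deriv {F f : ℝ → ℝ} {L : ℝ}
    (hF : ∀ x, HasDerivAt F (f x) x) (hLip : ∀ a b : ℝ, |f a - f b| ≤ L * |a - b|) (a s : ℝ) :
    |F (a + s) - F a - f a * s| ≤ L / 2 * s ^ 2 := by
  have hfc : Continuous f := by
    refine (LipschitzWith.of_dist_le_mul (K := ‖L‖₊) fun p q => ?_).continuous
    rw [Real.dist_eq, Real.dist_eq, coe_nnnorm, Real.norm_eq_abs]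
    exact (hLip p q).trans (mul_le_mul_of_nonneg_right (le_abs_self L) (abs_nonneg _))
  -- Parametrizing the segment by `t ∈ [0, 1]` avoids distinguishing the sign of `s`.
  have hφ (t : ℝ) : HasDerivAt (fun t => F (a + t * s) - t * (f a * s))
      (s * (f (a + t * s) - f a)) t :=
    (((hF (a + t * s)).comp t (((hasDerivAt_id t).mul_const s).const_add a)).sub
      ((hasDerivAt_id t).mul_const (f a * s))).congr_deriv (by ring)
  have hFTC : F (a + s) - F a - f a * s = ∫ t in (0 : ℝ)..1, s * (f (a + t * s) - f a) := by
    rw [intervalIntegral.integral_eq_sub_of_hasDerivAt (fun t _ => hφ t)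
      ((by fun_prop : Continuous fun t => s * (f (a + t * s) - f a)).intervalIntegrable 0 1)]
    simp only [one_mul, zero_mul, add_zero, sub_zero]
    ring
  have hbound : ∀ t ∈ Set.Ioc (0 : ℝ) 1, ‖s * (f (a + t * s) - f a)‖ ≤ L * s ^ 2 * t := by
    intro t ht
    rw [Real.norm_eq_abs, abs_mul]
    calc |s| * |f (a + t * s) - f a| ≤ |s| * (L * |a + t * s - a|) :=
          mul_le_mul_of_nonneg_left (hLip _ _) (abs_nonneg s)
      _ = L * s ^ 2 * t := by
          rw [add_sub_cancel_left, abs_mul, abs_of_pos ht.1, ← sq_abs s]; ring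
  have hmom : ∫ t in (0 : ℝ)..1, L * s ^ 2 * t = L / 2 * s ^ 2 := by
    rw [intervalIntegral.integral_const_mul, integral_id]; ring
  rw [hFTC, ← hmom]
  exact intervalIntegral.norm_integral_le_of_norm_le zero_le_one
    (Eventually.of_forall hbound) ((continuous_const_mul (L * s ^ 2)).intervalIntegrable 0 1)

theorem MeasureTheory.Integrable.id_mul_of_sq_mul {K : ℝ → ℝ} (hK : Integrable K)
    (hK2 : Integrable fun z => z ^ 2 * K z) : Integrable fun z => z * K z := by
  refine (hK.norm.add hK2.norm).mono' (aestronglyMeasurable_id.mul hK.1)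
    (Eventually.of_forall fun z => ?_)
  simp only [norm_mul, Real.norm_eq_abs, abs_pow, Pi.add_apply]
  nlinarith [sq_nonneg (|z| - 1), abs_nonneg z, abs_nonneg (K z), sq_abs z]

theorem integral_id_mul_eq_zero_of_even {K : ℝ → ℝ} (hK : ∀ z, K (-z) = K z) :
    ∫ z, z * K z = 0 := by
  have h : ∫ z, -z * K (-z) = ∫ z, z * K z := integral_neg_eq_self (fun z => z * K z) volume
  simp only [hK, neg_mul, integral_neg] at h
  linarith

theorem abs_integral_kernel_mul_sub_le {K G : ℝ → ℝ} {c C : ℝ} (hK0 : ∀ z, 0 ≤ K z)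
    (hKint : Integrable K) (hK1 : ∫ z, K z = 1) (hKsymm : ∀ z, K (-z) = K z)
    (hKmom2 : Integrable fun z => z ^ 2 * K z) (hG : AEStronglyMeasurable G)
    (hTaylor : ∀ z, |G z - G 0 - c * z| ≤ C * z ^ 2) :
    |(∫ z, K z * G z) - G 0| ≤ C * ∫ z, z ^ 2 * K z := by
  set R := fun z => G z - G 0 - c * z
  have hKR_le : ∀ z, ‖K z * R z‖ ≤ C * (z ^ 2 * K z) := fun z => by
    rw [norm_mul, Real.norm_of_nonneg (hK0 z), Real.norm_eq_abs, mul_comm]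
    calc |R z| * K z ≤ C * z ^ 2 * K z := mul_le_mul_of_nonneg_right (hTaylor z) (hK0 z)
      _ = C * (z ^ 2 * K z) := mul_assoc _ _ _
  have hKR : Integrable fun z => K z * R z :=
    (hKmom2.const_mul C).mono' (by fun_prop) (Eventually.of_forall hKR_le)
  have hzK := hKint.id_mul_of_sq_mul hKmom2
  have hsplit : (fun z => K z * G z) = fun z => (K z * G 0 + K z * R z) + c * (z * K z) := by
    ext z; simp only [R]; ring
  have hKG : ∫ z, K z * G z = G 0 + ∫ z, K z * R z := by
    rw [hsplit, integral_add ((hKint.mul_const _).fun_add hKR) (hzK.const_mul c),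
      integral_add (hKint.mul_const _) hKR, integral_mul_const, integral_const_mul,
      integral_id_mul_eq_zero_of_even hKsymm, hK1]
    ring
  rw [hKG, add_sub_cancel_left, ← integral_const_mul]
  exact norm_integral_le_of_norm_le (hKmom2.const_mul C) (Eventually.of_forall hKR_le)

theorem naive_distribution_interior_bias_general
    (K F f : ℝ → ℝ) (L : ℝ)
    (hK0 : ∀ z, 0 ≤ K z) (hKint : Integrable K)
    (hK1 : (∫ z, K z) = 1) (hKsymm : ∀ z, K (-z) = K z)
    (hKmom2 : Integrable (fun z => z ^ 2 * K z))
    (hF : ∀ x, HasDerivAt F (f x) x)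
    (hLip : ∀ a b : ℝ, |f a - f b| ≤ L * |a - b|) :
    ∀ (x h : ℝ), 0 < h →
      |(∫ z, K z * F (x - h * z)) - F x| ≤ L / 2 * h ^ 2 * ∫ z, z ^ 2 * K z := by
  intro x h _
  have hFc : Continuous F := continuous_iff_continuousAt.2 fun y => (hF y).continuousAt
  have hTaylor (z : ℝ) :
      |F (x - h * z) - F (x - h * 0) - -(h * f x) * z| ≤ L / 2 * h ^ 2 * z ^ 2 := by
    have := abs_sub_sub_mul_le_of_lipschitz_deriv hF hLip x (-(h * z))
    rw [← sub_eq_add_neg] at this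
    rw [mul_zero, sub_zero]
    convert this using 1
    · congr 1; ring
    · ring
  simpa only [mul_zero, sub_zero] using
    abs_integral_kernel_mul_sub_le (G := fun z => F (x - h * z)) hK0 hKint hK1 hKsymm hKmom2
      (hFc.comp (by fun_prop)).aestronglyMeasurable hTaylor

/-- Interior bias of the naive kernel distribution estimator is `O(h²)`:
for a symmetric kernel `K` with finite second moment, and a distribution
function `F` with derivative `f` which is `L`-Lipschitz,
`|∫ K(z) F(x − h z) dz − F(x)| ≤ (L/2) h² ∫ z² K(z) dz`. -/
theorem naive_distribution_interior_bias
    (K F f : ℝ → ℝ) (L : ℝ)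
    (hK0 : ∀ z, 0 ≤ K z) (hKint : Integrable K)
    (hK1 : (∫ z, K z) = 1) (hKsymm : ∀ z, K (-z) = K z)
    (hKmom2 : Integrable (fun z => z ^ 2 * K z))
    (hF : ∀ x, HasDerivAt F (f x) x)
    (hL : 0 ≤ L)
    (hLip : ∀ a b : ℝ, |f a - f b| ≤ L * |a - b|) :
    ∀ (x h : ℝ), 0 < h →
      |(∫ z, K z * F (x - h * z)) - F x| ≤ L / 2 * h ^ 2 * ∫ z, z ^ 2 * K z :=
  naive_distribution_interior_bias_general K F f L hK0 hKint hK1 hKsymm hKmom2 hF hLip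
end

section
/- Let x ∈ ℝ, let (hₙ) be a sequence of positive reals with hₙ → 0 and n·hₙ → ∞, and let f̂ₙ(x) = (1/(n hₙ)) Σ_{i=1}^n K((x − Xᵢ)/hₙ) be the naive kernel density estimator. Then n·hₙ·Var(f̂ₙ(x)) → f(x) · ∫_ℝ K(z)² dz as n → ∞. (Hence Var[f̂(x)] = f(x)(∫K²)/(nh) + O(1/n).) -/
/-!
Writing `g(y) = K((x - y)/h)`, independence and identical distribution give
`Var f̂ₙ(x) = Var g(X₀) / (n h²)`, and the substitution `y = x - h z` turns the moments of `g(X₀)`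
into `E g(X₀)ᵏ = h ∫ f(x - h z) K(z)ᵏ dz`. Hence, exactly for every `n ≥ 1`,
`n h Var f̂ₙ(x) = ∫ f(x - h z) K(z)² dz - h (∫ f(x - h z) K(z) dz)²`,
and as `h → 0` dominated convergence (by `sup f · |K|ᵏ`) sends the first term to `f(x) ∫ K²`
and the second to `0`.
-/

open MeasureTheory Filter Topology ProbabilityTheory

lemma integral_mul_comp_sub_div (f g : ℝ → ℝ) (x : ℝ) {h : ℝ} (hh : 0 < h) :
    ∫ y, f y * g ((x - y) / h) = h * ∫ z, f (x - h * z) * g z := by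
  calc ∫ y, f y * g ((x - y) / h)
      = ∫ u, f (x - u) * g (u / h) := by
        rw [← integral_sub_left_eq_self _ volume x]; simp
    _ = ∫ u, (fun z => f (x - h * z) * g z) (u / h) := by
        simp only [mul_div_cancel₀ _ hh.ne']
    _ = h * ∫ z, f (x - h * z) * g z := by
        rw [Measure.integral_comp_div (fun z => f (x - h * z) * g z), abs_of_pos hh, smul_eq_mul]

lemma integral_comp_eq_integral_mul_density {Ω : Type*} [MeasurableSpace Ω] {μ : Measure Ω}
    {X : Ω → ℝ} (hX : AEMeasurable X μ) {f : ℝ → ℝ} (hf0 : ∀ y, 0 ≤ f y) (hfmeas : Measurable f)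
    (hdens : μ.map X = volume.withDensity (fun y => ENNReal.ofReal (f y)))
    {g : ℝ → ℝ} (hg : Measurable g) :
    ∫ ω, g (X ω) ∂μ = ∫ y, f y * g y := by
  rw [← integral_map hX hg.aestronglyMeasurable, hdens,
    integral_withDensity_eq_integral_toReal_smul hfmeas.ennreal_ofReal
      (ae_of_all _ fun _ => ENNReal.ofReal_lt_top)]
  simp only [ENNReal.toReal_ofReal (hf0 _), smul_eq_mul]

lemma variance_sum_of_iIndepFun_of_identDistrib {Ω ι : Type*} [MeasurableSpace Ω]
    {μ : Measure Ω} {Y : ι → Ω → ℝ} {Z : Ω → ℝ} (s : Finset ι) (hY : iIndepFun Y μ)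
    (hZ : MemLp Z 2 μ) (hid : ∀ i ∈ s, IdentDistrib (Y i) Z μ μ) :
    variance (∑ i ∈ s, Y i) μ = s.card * variance Z μ := by
  rw [IndepFun.variance_sum (fun i hi => (hid i hi).memLp_iff.2 hZ)
      (fun i _ j _ hij => hY.indepFun hij),
    Finset.sum_congr rfl fun i hi => (hid i hi).variance_eq, Finset.sum_const, nsmul_eq_mul]

lemma tendsto_integral_comp_sub_mul {ι : Type*} {l : Filter ι} [l.IsCountablyGenerated]
    {f g : ℝ → ℝ} {C x : ℝ} (hfC : ∀ y, |f y| ≤ C) (hfmeas : Measurable f)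
    (hfcont : ContinuousAt f x) (hg : Integrable g) {h : ι → ℝ} (hh : Tendsto h l (𝓝 0)) :
    Tendsto (fun i => ∫ z, f (x - h i * z) * g z) l (𝓝 (f x * ∫ z, g z)) := by
  rw [← integral_const_mul]
  refine tendsto_integral_filter_of_dominated_convergence (fun z => C * |g z|)
    (Eventually.of_forall fun i => ?_) (Eventually.of_forall fun i => ?_)
    (hg.abs.const_mul C) (ae_of_all _ fun z => ?_)
  · exact (hfmeas.comp (measurable_const.sub (measurable_const_mul _))).aestronglyMeasurable.mul
      hg.aestronglyMeasurable
  · exact ae_of_all _ fun z => by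
      rw [norm_mul, Real.norm_eq_abs, Real.norm_eq_abs]
      exact mul_le_mul_of_nonneg_right (hfC _) (abs_nonneg _)
  · have harg : Tendsto (fun i => x - h i * z) l (𝓝 x) := by
      simpa using tendsto_const_nhds.sub (hh.mul_const z)
    exact (hfcont.tendsto.comp harg).mul_const _

lemma mul_variance_naive_kde_eq {Ω : Type*} [MeasurableSpace Ω] {μ : Measure Ω}
    [IsProbabilityMeasure μ] {X : ℕ → Ω → ℝ} (hindep : iIndepFun X μ)
    (hid : ∀ i, IdentDistrib (X i) (X 0) μ μ) {f : ℝ → ℝ} (hf0 : ∀ y, 0 ≤ f y)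
    (hfmeas : Measurable f)
    (hdens : μ.map (X 0) = volume.withDensity (fun y => ENNReal.ofReal (f y)))
    {K : ℝ → ℝ} {C : ℝ} (hKC : ∀ z, |K z| ≤ C) (hKmeas : Measurable K)
    (x : ℝ) {n : ℕ} (hn : n ≠ 0) {h : ℝ} (hh : 0 < h) :
    n * h * variance (fun ω => 1 / (n * h) * ∑ i ∈ Finset.range n, K ((x - X i ω) / h)) μ
      = (∫ z, f (x - h * z) * K z ^ 2) - h * (∫ z, f (x - h * z) * K z) ^ 2 := by
  set g : ℝ → ℝ := fun y => K ((x - y) / h)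
  have hg : Measurable g := hKmeas.comp ((measurable_const.sub measurable_id).div_const h)
  have hg0 : MemLp (g ∘ X 0) 2 μ :=
    memLp_of_bounded (ae_of_all _ fun ω => abs_le.1 (hKC _))
      (hg.comp_aemeasurable (hid 0).aemeasurable_fst).aestronglyMeasurable 2
  have hmoment : ∀ φ : ℝ → ℝ, Measurable φ →
      ∫ ω, φ ((x - X 0 ω) / h) ∂μ = h * ∫ z, f (x - h * z) * φ z := fun φ hφ => by
    rw [integral_comp_eq_integral_mul_density (g := fun y => φ ((x - y) / h))
      (hid 0).aemeasurable_fst hf0 hfmeas hdens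
      (hφ.comp ((measurable_const.sub measurable_id).div_const h)),
      integral_mul_comp_sub_div f φ x hh]
  have hvar : variance (g ∘ X 0) μ
      = (h * ∫ z, f (x - h * z) * K z ^ 2) - (h * ∫ z, f (x - h * z) * K z) ^ 2 := by
    have hm1 : μ[g ∘ X 0] = h * ∫ z, f (x - h * z) * K z := hmoment K hKmeas
    have hm2 : μ[(g ∘ X 0) ^ 2] = h * ∫ z, f (x - h * z) * K z ^ 2 :=
      hmoment (fun z => K z ^ 2) (hKmeas.pow_const 2)
    rw [variance_eq_sub hg0, hm1, hm2]
  have hsum : variance (∑ i ∈ Finset.range n, g ∘ X i) μ = n * variance (g ∘ X 0) μ := by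
    simpa using variance_sum_of_iIndepFun_of_identDistrib (Finset.range n)
      (hindep.comp (fun _ => g) fun _ => hg) hg0 fun i _ => (hid i).comp hg
  have hest : (fun ω => 1 / (n * h) * ∑ i ∈ Finset.range n, K ((x - X i ω) / h))
      = fun ω => 1 / (n * h) * (∑ i ∈ Finset.range n, g ∘ X i) ω := by
    simp only [Finset.sum_apply, Function.comp_apply, g]
  rw [hest, variance_const_mul, hsum, hvar]
  have : (n : ℝ) ≠ 0 := Nat.cast_ne_zero.2 hn
  field_simp

theorem naive_density_variance_asymptotics_general
    {Ω : Type*} [MeasurableSpace Ω] (μ : Measure Ω) [IsProbabilityMeasure μ]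
    (X : ℕ → Ω → ℝ) (hXmeas : ∀ i, Measurable (X i))
    (hindep : iIndepFun X μ)
    (hident : ∀ i, Measure.map (X i) μ = Measure.map (X 0) μ)
    (f : ℝ → ℝ) (hf0 : ∀ y, 0 ≤ f y)
    (hfbdd : ∃ C, ∀ y, f y ≤ C) (hfmeas : Measurable f)
    (hdens : Measure.map (X 0) μ = volume.withDensity (fun y => ENNReal.ofReal (f y)))
    (K : ℝ → ℝ) (hK0 : ∀ z, 0 ≤ K z) (hKint : Integrable K)
    (hKmeas : Measurable K)
    (hKbdd : ∃ C, ∀ z, K z ≤ C)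
    (x : ℝ) (hfcont : ContinuousAt f x)
    (h : ℕ → ℝ) (hpos : ∀ n, 0 < h n)
    (hto0 : Tendsto h atTop (nhds 0)) :
    Tendsto
      (fun n : ℕ => (n : ℝ) * h n *
        variance (fun ω => (1 / ((n : ℝ) * h n)) *
          ∑ i ∈ Finset.range n, K ((x - X i ω) / h n)) μ)
      atTop (nhds (f x * ∫ z, (K z) ^ 2)) := by
  obtain ⟨Cf, hCf⟩ := hfbdd
  obtain ⟨CK, hCK⟩ := hKbdd
  have hfC : ∀ y, |f y| ≤ Cf := fun y => (abs_of_nonneg (hf0 y)).trans_le (hCf y)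
  have hKC : ∀ z, |K z| ≤ CK := fun z => (abs_of_nonneg (hK0 z)).trans_le (hCK z)
  have hK2 : Integrable fun z => K z ^ 2 := by
    simpa only [sq] using hKint.mul_bdd hKmeas.aestronglyMeasurable (ae_of_all _ hKC)
  have hid : ∀ i, IdentDistrib (X i) (X 0) μ μ :=
    fun i => ⟨(hXmeas i).aemeasurable, (hXmeas 0).aemeasurable, hident i⟩
  have hI₁ := tendsto_integral_comp_sub_mul hfC hfmeas hfcont hKint hto0
  have hI₂ := tendsto_integral_comp_sub_mul hfC hfmeas hfcont hK2 hto0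
  have hlim := hI₂.sub (hto0.mul (hI₁.pow 2))
  rw [zero_mul, sub_zero] at hlim
  refine hlim.congr' ?_
  filter_upwards [eventually_ne_atTop 0] with n hn
  exact (mul_variance_naive_kde_eq hindep hid hf0 hfmeas hdens hKC hKmeas x hn (hpos n)).symm

/-- Asymptotic variance of the naive kernel density estimator:
for an i.i.d. sample `X₁, X₂, …` with bounded density `f` continuous at `x`,
a bounded measurable kernel density `K`, and bandwidths `hₙ → 0` with
`n hₙ → ∞`, the naive estimator `f̂ₙ(x) = (1/(n hₙ)) Σᵢ K((x − Xᵢ)/hₙ)`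
satisfies `n hₙ Var(f̂ₙ(x)) → f(x) ∫ K²`. -/
theorem naive_density_variance_asymptotics
    {Ω : Type*} [MeasurableSpace Ω] (μ : Measure Ω) [IsProbabilityMeasure μ]
    (X : ℕ → Ω → ℝ) (hXmeas : ∀ i, Measurable (X i))
    (hindep : iIndepFun X μ)
    (hident : ∀ i, Measure.map (X i) μ = Measure.map (X 0) μ)
    (f : ℝ → ℝ) (hf0 : ∀ y, 0 ≤ f y)
    (hfbdd : ∃ C, ∀ y, f y ≤ C) (hfmeas : Measurable f)
    (hdens : Measure.map (X 0) μ = volume.withDensity (fun y => ENNReal.ofReal (f y)))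
    (K : ℝ → ℝ) (hK0 : ∀ z, 0 ≤ K z) (hKint : Integrable K)
    (hK1 : (∫ z, K z) = 1) (hKmeas : Measurable K)
    (hKbdd : ∃ C, ∀ z, K z ≤ C)
    (x : ℝ) (hfcont : ContinuousAt f x)
    (h : ℕ → ℝ) (hpos : ∀ n, 0 < h n)
    (hto0 : Tendsto h atTop (nhds 0))
    (hnh : Tendsto (fun n : ℕ => (n : ℝ) * h n) atTop atTop) :
    Tendsto
      (fun n : ℕ => (n : ℝ) * h n *
        variance (fun ω => (1 / ((n : ℝ) * h n)) *
          ∑ i ∈ Finset.range n, K ((x - X i ω) / h n)) μ)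
      atTop (nhds (f x * ∫ z, (K z) ^ 2)) :=
  naive_density_variance_asymptotics_general μ X hXmeas hindep hident f hf0 hfbdd hfmeas hdens K hK0
    hKint hKmeas hKbdd x hfcont h hpos hto0
end

section
/- For all real numbers l₀ < u₀, h > 0, all x ∈ ℝ, and all real sample points X₁, …, Xₙ: ∫_{l₀}^{x} (1/(nh)) Σ_{i=1}^n [ K((y − Xᵢ)/h) + K((y + Xᵢ − 2u₀)/h) + K((y + Xᵢ − 2l₀)/h) ] dy = F̂(x) − F̂(2u₀ − x) − F̂(2l₀ − x) + F̂(2u₀ − l₀), where F̂(y) := (1/n) Σ_{i=1}^n W((y − Xᵢ)/h). (This expresses the reflection-method distribution estimator F̂^[R](x) = ∫_{l₀}^x f̂^[R] in closed form in terms of the naive kernel distribution estimator F̂.) -/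
open MeasureTheory Filter Topology

/-- Closed form of the reflection-method distribution estimator: integrating the
reflection density estimator for support `[l₀, u₀]` from `l₀` to `x` gives
`F̂(x) − F̂(2u₀ − x) − F̂(2l₀ − x) + F̂(2u₀ − l₀)`, where `F̂` is the naive kernel
distribution estimator. -/
theorem reflection_distribution_closed_form
    (K W : ℝ → ℝ)
    (hK0 : ∀ z, 0 ≤ K z) (hKint : Integrable K)
    (hK1 : (∫ z, K z) = 1) (hKsymm : ∀ z, K (-z) = K z)
    (hW : ∀ t, W t = ∫ s in Set.Iic t, K s)
    (n : ℕ) (hn : 0 < n) (xs : Fin n → ℝ)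
    (l₀ u₀ : ℝ) (hlu : l₀ < u₀) (h : ℝ) (hh : 0 < h) (x : ℝ) :
    (∫ y in l₀..x, (1 / ((n : ℝ) * h)) *
        ∑ i, (K ((y - xs i) / h) + K ((y + xs i - 2 * u₀) / h)
          + K ((y + xs i - 2 * l₀) / h))) =
      (fun t => (1 / (n : ℝ)) * ∑ i, W ((t - xs i) / h)) x
        - (fun t => (1 / (n : ℝ)) * ∑ i, W ((t - xs i) / h)) (2 * u₀ - x)
        - (fun t => (1 / (n : ℝ)) * ∑ i, W ((t - xs i) / h)) (2 * l₀ - x)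
        + (fun t => (1 / (n : ℝ)) * ∑ i, W ((t - xs i) / h)) (2 * u₀ - l₀) := by
  have hh' : h ≠ 0 := ne_of_gt hh
  have hn' : (n : ℝ) ≠ 0 := Nat.cast_ne_zero.mpr hn.ne'
  -- integrability of shifted/scaled kernel
  have hint : ∀ c : ℝ, Integrable (fun y : ℝ => K ((y - c) / h)) := fun c =>
    (hKint.comp_div hh').comp_sub_right c
  -- key substitution lemma
  have key : ∀ a b c : ℝ,
      (∫ y in a..b, K ((y - c) / h)) = h * (W ((b - c) / h) - W ((a - c) / h)) := by
    intro a b c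
    have h1 : (∫ y in a..b, K ((y - c) / h)) = ∫ y in a - c..b - c, K (y / h) :=
      intervalIntegral.integral_comp_sub_right (fun y => K (y / h)) c
    rw [h1, intervalIntegral.integral_comp_div (fun y => K y) hh', hW, hW,
      intervalIntegral.integral_Iic_sub_Iic hKint.integrableOn hKint.integrableOn,
      smul_eq_mul]
  -- W(-t) = 1 - W t
  have hWneg : ∀ t : ℝ, W (-t) = 1 - W t := by
    intro t
    have h1 : (∫ s in Set.Iic (-t), K s) = ∫ s in Set.Ioi t, K s := by
      rw [show (∫ s in Set.Iic (-t), K s) = ∫ s in Set.Iic (-t), K (-s) by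
        simp [hKsymm], integral_comp_neg_Iic, neg_neg]
    have h2 : (∫ s in Set.Iic t, K s) + (∫ s in Set.Ioi t, K s) = 1 := by
      rw [intervalIntegral.integral_Iic_add_Ioi hKint.integrableOn hKint.integrableOn, hK1]
    rw [hW, hW, h1]; linarith
  -- per-index computation
  have hterm : ∀ i : Fin n,
      (∫ y in l₀..x, (K ((y - xs i) / h) + K ((y + xs i - 2 * u₀) / h)
          + K ((y + xs i - 2 * l₀) / h)))
        = h * (W ((x - xs i) / h) - W ((2 * u₀ - x - xs i) / h)
            - W ((2 * l₀ - x - xs i) / h) + W ((2 * u₀ - l₀ - xs i) / h)) := by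
    intro i
    have e2 : (fun y : ℝ => K ((y + xs i - 2 * u₀) / h))
        = fun y => K ((y - (2 * u₀ - xs i)) / h) := by funext y; ring_nf
    have e3 : (fun y : ℝ => K ((y + xs i - 2 * l₀) / h))
        = fun y => K ((y - (2 * l₀ - xs i)) / h) := by funext y; ring_nf
    have i1 : IntervalIntegrable (fun y : ℝ => K ((y - xs i) / h)) volume l₀ x :=
      (hint _).intervalIntegrable
    have i2 : IntervalIntegrable (fun y : ℝ => K ((y + xs i - 2 * u₀) / h)) volume l₀ x := by
      rw [e2]; exact (hint _).intervalIntegrable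
    have i3 : IntervalIntegrable (fun y : ℝ => K ((y + xs i - 2 * l₀) / h)) volume l₀ x := by
      rw [e3]; exact (hint _).intervalIntegrable
    rw [intervalIntegral.integral_add (i1.add i2) i3, intervalIntegral.integral_add i1 i2]
    rw [show (∫ y in l₀..x, K ((y + xs i - 2 * u₀) / h))
        = ∫ y in l₀..x, K ((y - (2 * u₀ - xs i)) / h) by rw [e2]]
    rw [show (∫ y in l₀..x, K ((y + xs i - 2 * l₀) / h))
        = ∫ y in l₀..x, K ((y - (2 * l₀ - xs i)) / h) by rw [e3]]
    rw [key, key, key]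
    have a1 : (x - (2 * u₀ - xs i)) / h = -((2 * u₀ - x - xs i) / h) := by ring
    have a2 : (l₀ - (2 * u₀ - xs i)) / h = -((2 * u₀ - l₀ - xs i) / h) := by ring
    have a3 : (x - (2 * l₀ - xs i)) / h = -((2 * l₀ - x - xs i) / h) := by ring
    have a4 : (l₀ - (2 * l₀ - xs i)) / h = -((l₀ - xs i) / h) := by ring
    rw [a1, a2, a3, a4, hWneg, hWneg, hWneg, hWneg]
    ring
  -- assemble
  rw [intervalIntegral.integral_const_mul,
    intervalIntegral.integral_finset_sum]
  · rw [Finset.sum_congr rfl (fun i _ => hterm i), ← Finset.mul_sum,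
      Finset.sum_add_distrib, Finset.sum_sub_distrib, Finset.sum_sub_distrib]
    field_simp
  · intro i _
    have e2 : (fun y : ℝ => K ((y + xs i - 2 * u₀) / h))
        = fun y => K ((y - (2 * u₀ - xs i)) / h) := by funext y; ring_nf
    have e3 : (fun y : ℝ => K ((y + xs i - 2 * l₀) / h))
        = fun y => K ((y - (2 * l₀ - xs i)) / h) := by funext y; ring_nf
    have i2 : IntervalIntegrable (fun y : ℝ => K ((y + xs i - 2 * u₀) / h)) volume l₀ x := by
      rw [e2]; exact (hint _).intervalIntegrable
    have i3 : IntervalIntegrable (fun y : ℝ => K ((y + xs i - 2 * l₀) / h)) volume l₀ x := by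
      rw [e3]; exact (hint _).intervalIntegrable
    have i1 : IntervalIntegrable (fun y : ℝ => K ((y - xs i) / h)) volume l₀ x :=
      (hint _).intervalIntegrable
    exact (i1.add i2).add i3
end

section
/- Define g(y) := f(y) + f(2u₀ − y) + f(2l₀ − y) for y ∈ ℝ (the reflected extension of f). Then for every h with 0 < h < (u₀ − l₀)/2 and every x ∈ [l₀, u₀]: |∫_ℝ K(z) g(x − h z) dz − f(x)| ≤ L · h · ∫_ℝ |z| K(z) dz. (The quantity ∫_ℝ K(z) g(x − h z) dz is the expectation of the reflection density estimator f̂^[R](x); hence the bias of the reflection method is O(h) uniformly over [l₀, u₀], so the estimator recovers consistency in the boundary region.) -/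
open MeasureTheory Filter Topology

/-- The reflection density estimator is boundary-bias-free to order `h`:
for a symmetric kernel `K` supported in `[−1,1]` and a density `f` vanishing
outside `[l₀, u₀]` and `L`-Lipschitz there, the reflected extension
`g(y) = f(y) + f(2u₀ − y) + f(2l₀ − y)` satisfies, for `0 < h < (u₀ − l₀)/2`
and all `x ∈ [l₀, u₀]`,
`|∫ K(z) g(x − h z) dz − f(x)| ≤ L h ∫ |z| K(z) dz`. -/
theorem reflection_density_bias
    (K f : ℝ → ℝ) (l₀ u₀ L : ℝ) (hlu : l₀ < u₀)
    (hK0 : ∀ z, 0 ≤ K z) (hKint : Integrable K)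
    (hK1 : (∫ z, K z) = 1) (hKsymm : ∀ z, K (-z) = K z)
    (hKsupp : ∀ z : ℝ, 1 < |z| → K z = 0)
    (hfzero : ∀ y, y ∉ Set.Icc l₀ u₀ → f y = 0)
    (hL : 0 ≤ L)
    (hLip : ∀ a ∈ Set.Icc l₀ u₀, ∀ b ∈ Set.Icc l₀ u₀, |f a - f b| ≤ L * |a - b|) :
    ∀ h : ℝ, 0 < h → h < (u₀ - l₀) / 2 →
      ∀ x ∈ Set.Icc l₀ u₀,
        |(∫ z, K z * ((fun y => f y + f (2 * u₀ - y) + f (2 * l₀ - y)) (x - h * z)))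
            - f x| ≤ L * h * ∫ z, |z| * K z := by
  intro h hh0 hh2 x hx
  obtain ⟨hxl, hxu⟩ := hx
  set g : ℝ → ℝ := fun y => f y + f (2 * u₀ - y) + f (2 * l₀ - y) with hgdef
  -- measurability of f
  have hfmeas : Measurable f := by
    have hcont : ContinuousOn f (Set.Icc l₀ u₀) := by
      apply LipschitzOnWith.continuousOn (K := L.toNNReal)
      apply LipschitzOnWith.of_dist_le_mul
      intro a ha b hb
      calc dist (f a) (f b) = |f a - f b| := Real.dist_eq _ _
        _ ≤ L * |a - b| := hLip a ha b hb
        _ ≤ L.toNNReal * dist a b := by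
            rw [Real.dist_eq]
            exact mul_le_mul_of_nonneg_right (Real.le_coe_toNNReal L) (abs_nonneg _)
    have : f = (Set.Icc l₀ u₀).piecewise f (fun _ => (0:ℝ)) := by
      funext y
      by_cases hy : y ∈ Set.Icc l₀ u₀
      · simp [Set.piecewise, hy]
      · simp [Set.piecewise, hy, hfzero y hy]
    rw [this]
    exact hcont.measurable_piecewise continuousOn_const measurableSet_Icc
  have hgmeas : Measurable g := by
    apply Measurable.add
    apply Measurable.add hfmeas
    · exact hfmeas.comp (measurable_const.sub measurable_id)
    · exact hfmeas.comp (measurable_const.sub measurable_id)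
  -- boundedness of f
  set C : ℝ := |f l₀| + L * (u₀ - l₀) with hCdef
  have hC0 : 0 ≤ C := by
    have : 0 ≤ L * (u₀ - l₀) := mul_nonneg hL (by linarith)
    positivity
  have hfbdd : ∀ y, |f y| ≤ C := by
    intro y
    by_cases hy : y ∈ Set.Icc l₀ u₀
    · have h1 := hLip y hy l₀ ⟨le_refl _, hlu.le⟩
      have h2 : |y - l₀| ≤ u₀ - l₀ := by
        rw [abs_of_nonneg (by linarith [hy.1])]
        linarith [hy.2]
      have := abs_sub_abs_le_abs_sub (f y) (f l₀)
      have : |f y| ≤ |f l₀| + L * |y - l₀| := by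
        have := abs_sub_abs_le_abs_sub (f y) (f l₀)
        linarith
      calc |f y| ≤ |f l₀| + L * |y - l₀| := this
        _ ≤ C := by
          rw [hCdef]
          have := mul_le_mul_of_nonneg_left h2 hL
          linarith
    · rw [hfzero y hy]; simpa using hC0
  -- key pointwise estimate
  have hkey : ∀ y : ℝ, y ≠ l₀ → y ≠ u₀ → |y - x| ≤ h → |g y - f x| ≤ L * |y - x| := by
    intro y hyl hyu hyx
    have habs := abs_le.mp hyx
    have hxIcc : x ∈ Set.Icc l₀ u₀ := ⟨hxl, hxu⟩
    rcases lt_trichotomy y l₀ with hy | hy | hy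
    · -- y < l₀ : g y = f (2 l₀ - y)
      have h1 : f y = 0 := hfzero y (by simp only [Set.mem_Icc, not_and, not_le]; intro _; linarith)
      have h2 : f (2 * u₀ - y) = 0 := hfzero _ (by simp only [Set.mem_Icc, not_and, not_le]; intro _; linarith)
      have hmem : 2 * l₀ - y ∈ Set.Icc l₀ u₀ := by
        constructor <;> [linarith; linarith [habs.1]]
      have h3 := hLip _ hmem x hxIcc
      have h4 : |2 * l₀ - y - x| ≤ |y - x| := by
        rw [abs_sub_comm y x, abs_of_nonneg (by linarith : (0:ℝ) ≤ x - y), abs_le]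
        constructor <;> linarith
      have hgy : g y = f (2 * l₀ - y) := by simp [hgdef, h1, h2]
      rw [hgy]
      calc |f (2 * l₀ - y) - f x| ≤ L * |2 * l₀ - y - x| := h3
        _ ≤ L * |y - x| := mul_le_mul_of_nonneg_left h4 hL
    · exact absurd hy hyl
    · rcases lt_trichotomy y u₀ with hy' | hy' | hy'
      · -- l₀ < y < u₀ : g y = f y
        have h2 : f (2 * u₀ - y) = 0 := hfzero _ (by simp only [Set.mem_Icc, not_and, not_le]; intro _; linarith)
        have h3 : f (2 * l₀ - y) = 0 := hfzero _ (by simp only [Set.mem_Icc, not_and, not_le]; intro hc; linarith)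
        have hgy : g y = f y := by simp [hgdef, h2, h3]
        rw [hgy]
        exact hLip y ⟨hy.le, hy'.le⟩ x hxIcc
      · exact absurd hy' hyu
      · -- y > u₀ : g y = f (2 u₀ - y)
        have h1 : f y = 0 := hfzero y (by simp only [Set.mem_Icc, not_and, not_le]; intro _; linarith)
        have h3 : f (2 * l₀ - y) = 0 := hfzero _ (by simp only [Set.mem_Icc, not_and, not_le]; intro _; linarith)
        have hmem : 2 * u₀ - y ∈ Set.Icc l₀ u₀ := by
          constructor <;> [linarith [habs.2]; linarith]
        have h4 := hLip _ hmem x hxIcc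
        have h5 : |2 * u₀ - y - x| ≤ |y - x| := by
          rw [abs_of_nonneg (by linarith : (0:ℝ) ≤ y - x), abs_le]
          constructor <;> linarith
        have hgy : g y = f (2 * u₀ - y) := by simp [hgdef, h1, h3]
        rw [hgy]
        calc |f (2 * u₀ - y) - f x| ≤ L * |2 * u₀ - y - x| := h4
          _ ≤ L * |y - x| := mul_le_mul_of_nonneg_left h5 hL
  -- integrabilities
  have hgbdd : ∀ y, |g y| ≤ 3 * C := by
    intro y
    have := hfbdd y
    have := hfbdd (2 * u₀ - y)
    have := hfbdd (2 * l₀ - y)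
    calc |g y| ≤ |f y + f (2 * u₀ - y)| + |f (2 * l₀ - y)| := abs_add_le _ _
      _ ≤ |f y| + |f (2 * u₀ - y)| + |f (2 * l₀ - y)| := by
          have := abs_add_le (f y) (f (2 * u₀ - y)); linarith
      _ ≤ 3 * C := by linarith
  have hint1 : Integrable (fun z => K z * g (x - h * z)) := by
    apply Integrable.mono' (hKint.const_mul (3 * C))
    · exact (hKint.aestronglyMeasurable.mul
        ((hgmeas.comp (measurable_const.sub (measurable_id.const_mul h))).aestronglyMeasurable))
    · filter_upwards with z
      rw [Real.norm_eq_abs, abs_mul, abs_of_nonneg (hK0 z)]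
      calc K z * |g (x - h * z)| ≤ K z * (3 * C) :=
            mul_le_mul_of_nonneg_left (hgbdd _) (hK0 z)
        _ = 3 * C * K z := by ring
  have hintzK : Integrable (fun z => |z| * K z) := by
    apply Integrable.mono' hKint
    · exact (continuous_abs.aestronglyMeasurable.mul hKint.aestronglyMeasurable)
    · filter_upwards with z
      rw [Real.norm_eq_abs, abs_mul, abs_abs, abs_of_nonneg (hK0 z)]
      by_cases hz : |z| ≤ 1
      · exact mul_le_of_le_one_left (hK0 z) hz
      · rw [hKsupp z (not_le.mp hz)]; simp
  -- rewrite the difference as a single integral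
  have heq : (∫ z, K z * g (x - h * z)) - f x = ∫ z, K z * (g (x - h * z) - f x) := by
    have : ∀ z, K z * (g (x - h * z) - f x) = K z * g (x - h * z) - K z * f x := by
      intro z; ring
    rw [show (fun z => K z * (g (x - h * z) - f x))
        = fun z => K z * g (x - h * z) - K z * f x from funext this]
    rw [integral_sub hint1 (hKint.mul_const (f x)), integral_mul_const, hK1, one_mul]
  -- the bad set {z | x - h z ∈ {l₀, u₀}} is null
  have hbad : ∀ᵐ z : ℝ, x - h * z ≠ l₀ ∧ x - h * z ≠ u₀ := by
    have : ∀ᵐ z : ℝ, z ∉ ({(x - l₀) / h, (x - u₀) / h} : Set ℝ) := by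
      have hfin : ({(x - l₀) / h, (x - u₀) / h} : Set ℝ).Finite :=
        (Set.finite_singleton _).insert _
      have hz : volume ({(x - l₀) / h, (x - u₀) / h} : Set ℝ) = 0 :=
        hfin.measure_zero _
      rw [ae_iff]
      have hset : {a : ℝ | ¬ a ∉ ({(x - l₀) / h, (x - u₀) / h} : Set ℝ)}
          = ({(x - l₀) / h, (x - u₀) / h} : Set ℝ) := by
        ext a; simp; tauto
      rw [hset]
      exact hz
    filter_upwards [this] with z hz
    simp only [Set.mem_insert_iff, Set.mem_singleton_iff, not_or] at hz
    constructor
    · intro hc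
      exact hz.1 (by field_simp; linarith)
    · intro hc
      exact hz.2 (by field_simp; linarith)
  -- conclude
  rw [show ((∫ z, K z * ((fun y => f y + f (2 * u₀ - y) + f (2 * l₀ - y)) (x - h * z))) - f x)
      = (∫ z, K z * g (x - h * z)) - f x from rfl, heq]
  have hbound : ∀ᵐ z : ℝ, ‖K z * (g (x - h * z) - f x)‖ ≤ L * h * (|z| * K z) := by
    filter_upwards [hbad] with z hz
    rw [Real.norm_eq_abs, abs_mul, abs_of_nonneg (hK0 z)]
    by_cases hKz : K z = 0
    · simp [hKz]
    · have hz1 : |z| ≤ 1 := by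
        by_contra hc
        exact hKz (hKsupp z (not_le.mp hc))
      have hyx : |(x - h * z) - x| ≤ h := by
        rw [show (x - h * z) - x = -(h * z) by ring, abs_neg, abs_mul,
          abs_of_nonneg hh0.le]
        calc h * |z| ≤ h * 1 := mul_le_mul_of_nonneg_left hz1 hh0.le
          _ = h := mul_one h
      have := hkey (x - h * z) hz.1 hz.2 hyx
      have h2 : |(x - h * z) - x| = h * |z| := by
        rw [show (x - h * z) - x = -(h * z) by ring, abs_neg, abs_mul,
          abs_of_nonneg hh0.le]
      rw [h2] at this
      calc K z * |g (x - h * z) - f x| ≤ K z * (L * (h * |z|)) :=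
            mul_le_mul_of_nonneg_left this (hK0 z)
        _ = L * h * (|z| * K z) := by ring
  calc |∫ z, K z * (g (x - h * z) - f x)| = ‖∫ z, K z * (g (x - h * z) - f x)‖ :=
        (Real.norm_eq_abs _).symm
    _ ≤ ∫ z, L * h * (|z| * K z) :=
        norm_integral_le_of_norm_le (hintzK.const_mul (L * h)) hbound
    _ = L * h * ∫ z, |z| * K z := integral_const_mul _ _
end

section
/- Define g(y) := f(y) + f(2u₀ − y) + f(2l₀ − y) for y ∈ ℝ (the reflected extension of f). If moreover the (left) derivative of f at u₀ vanishes, f'(u₀) = 0, then for every h with 0 < h < (u₀ − l₀)/2: |∫_ℝ K(z) g(u₀ − h z) dz − f(u₀)| ≤ L' · h² · ∫_{[0,1]} z² K(z) dz. (Hence when f'(u₀−) = 0 the boundary bias of the reflection density estimator at u₀ becomes of order h².) -/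
/-!
For `|z| ≤ 1` and `0 < h < u₀ - l₀` the reflection about `l₀` lands left of `l₀`, and of
`f (u₀ - h z)` and `f (u₀ + h z)` only the one evaluated inside `[l₀, u₀]` survives, so the
reflected extension satisfies `g (u₀ - h z) = f (u₀ - h |z|)` for `z ≠ 0`. Since `f' u₀ = 0` and
`f'` is `L'`-Lipschitz, `|f' t| ≤ L' (u₀ - t)`, which integrates to the second-order bound
`|f u₀ - f (u₀ - s)| ≤ L' s² / 2`. Integrating against `K`, whose symmetry turns `∫ z² K` into
`2 ∫_{[0,1]} z² K`, gives the estimate.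
-/

open MeasureTheory Set

theorem abs_sub_le_of_abs_deriv_le_mul_sub {f f' : ℝ → ℝ} {a b C : ℝ} (hab : a ≤ b)
    (hf : ContinuousOn f (Icc a b))
    (hf' : ∀ t ∈ Ico a b, HasDerivWithinAt f (f' t) (Ici t) t)
    (hbound : ∀ t ∈ Ico a b, |f' t| ≤ C * (b - t)) :
    |f b - f a| ≤ C / 2 * (b - a) ^ 2 := by
  have hB : ∀ t, HasDerivAt (fun t => C / 2 * ((b - a) ^ 2 - (b - t) ^ 2)) (C * (b - t)) t := by
    intro t
    refine ((((hasDerivAt_id' t).const_sub b).fun_pow 2).const_sub ((b - a) ^ 2)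
      |>.const_mul (C / 2)).congr_deriv ?_
    ring
  simpa using image_norm_le_of_norm_deriv_right_le_deriv_boundary
    (hf.sub continuousOn_const) (fun t ht => (hf' t ht).sub_const (f a)) (by simp) hB hbound
    (right_mem_Icc.2 hab)

theorem abs_sub_le_of_lipschitz_deriv_of_deriv_eq_zero {f f' : ℝ → ℝ} {l u L : ℝ}
    (hderiv : ∀ y ∈ Icc l u, HasDerivWithinAt f (f' y) (Icc l u) y)
    (hLip : ∀ a ∈ Icc l u, ∀ b ∈ Icc l u, |f' a - f' b| ≤ L * |a - b|)
    (hu : f' u = 0) {x : ℝ} (hx : x ∈ Icc l u) :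
    |f u - f x| ≤ L / 2 * (u - x) ^ 2 := by
  have hsub : Icc x u ⊆ Icc l u := Icc_subset_Icc_left hx.1
  refine abs_sub_le_of_abs_deriv_le_mul_sub (f' := f') hx.2
    (fun y hy => (hderiv y (hsub hy)).continuousWithinAt.mono hsub) (fun t ht => ?_)
    (fun t ht => ?_)
  · exact (hderiv t (hsub (Ico_subset_Icc_self ht))).mono_of_mem_nhdsWithin
      (Icc_mem_nhdsGE_of_mem ⟨hx.1.trans ht.1, ht.2⟩)
  · have := hLip t (hsub (Ico_subset_Icc_self ht)) u (right_mem_Icc.2 (hx.1.trans hx.2))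
    rwa [hu, sub_zero, abs_sub_comm, abs_of_nonneg (sub_nonneg.2 ht.2.le)] at this

theorem ContinuousOn.measurable_of_eq_zero_off {α γ : Type*} [TopologicalSpace α]
    [MeasurableSpace α] [OpensMeasurableSpace α] [TopologicalSpace γ] [MeasurableSpace γ]
    [BorelSpace γ] [Zero γ] {f : α → γ} {s : Set α} (hf : ContinuousOn f s)
    (hs : MeasurableSet s) (h0 : ∀ x ∉ s, f x = 0) : Measurable f := by
  classical
  convert hf.measurable_piecewise (continuousOn_const (c := (0 : γ))) hs using 1
  funext x
  by_cases hx : x ∈ s <;> simp [hx, h0]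

theorem integral_eq_two_mul_setIntegral_Icc_of_even {φ : ℝ → ℝ} (heven : ∀ z, φ (-z) = φ z)
    (hsupp : ∀ z, 1 < |z| → φ z = 0) :
    ∫ z, φ z = 2 * ∫ z in Icc 0 1, φ z := by
  have habs : ∀ z, φ |z| = φ z := fun z => by
    rcases abs_choice z with h | h <;> simp [h, heven]
  calc ∫ z, φ z = ∫ z, φ |z| := by simp only [habs]
    _ = 2 * ∫ z in Ioi 0, φ z := integral_comp_abs
    _ = 2 * ∫ z in Ici 0, φ z := by rw [integral_Ici_eq_integral_Ioi]
    _ = 2 * ∫ z in Icc 0 1, φ z := by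
      rw [setIntegral_eq_of_subset_of_forall_sdiff_eq_zero measurableSet_Ici Icc_subset_Ici_self]
      rintro z ⟨hz0 : 0 ≤ z, hz1⟩
      exact hsupp z (by rw [abs_of_nonneg hz0]; exact not_le.1 fun h => hz1 ⟨hz0, h⟩)

def reflectedExtension (f : ℝ → ℝ) (l u y : ℝ) : ℝ :=
  f y + f (2 * u - y) + f (2 * l - y)

section Reflection

variable {f : ℝ → ℝ} {l u h : ℝ}

theorem reflectedExtension_sub_mul_eq (hf : ∀ y ∉ Icc l u, f y = 0) (hh0 : 0 < h)
    (hh : h < u - l) {z : ℝ} (hz : |z| ≤ 1) (hz0 : z ≠ 0) :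
    reflectedExtension f l u (u - h * z) = f (u - h * |z|) := by
  have hz1 : z ≤ 1 := (abs_le.1 hz).2
  have hlow : f (2 * l - (u - h * z)) = 0 := hf _ fun hy => by nlinarith [hy.1]
  rw [reflectedExtension, hlow, add_zero]
  rcases hz0.lt_or_gt with hneg | hpos
  · have : f (u - h * z) = 0 := hf _ fun hy => by nlinarith [hy.2]
    rw [this, zero_add, abs_of_neg hneg]
    congr 1
    ring
  · have : f (2 * u - (u - h * z)) = 0 := hf _ fun hy => by nlinarith [hy.2]
    rw [this, abs_of_pos hpos, add_zero]

theorem integral_mul_reflectedExtension_eq {K : ℝ → ℝ} (hK : ∀ z, 1 < |z| → K z = 0)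
    (hf : ∀ y ∉ Icc l u, f y = 0) (hh0 : 0 < h) (hh : h < u - l) :
    ∫ z, K z * reflectedExtension f l u (u - h * z) = ∫ z, K z * f (u - h * |z|) := by
  refine integral_congr_ae ?_
  filter_upwards [compl_mem_ae_iff.2 (measure_singleton (0 : ℝ))] with z hz0
  by_cases hz : |z| ≤ 1
  · rw [reflectedExtension_sub_mul_eq hf hh0 hh hz hz0]
  · simp [hK z (not_le.1 hz)]

end Reflection

theorem integral_mul_sub_eq_of_integral_eq_one {α : Type*} [MeasurableSpace α] {μ : Measure α}
    {K g : α → ℝ} {c : ℝ} (hK : Integrable K μ) (hK1 : ∫ z, K z ∂μ = 1)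
    (hKg : Integrable (fun z => K z * (g z - c)) μ) :
    (∫ z, K z * g z ∂μ) - c = ∫ z, K z * (g z - c) ∂μ := by
  have hKg' : Integrable (fun z => K z * g z) μ :=
    (hKg.add (hK.mul_const c)).congr (ae_of_all _ fun z => by simp only [Pi.add_apply]; ring)
  simp only [mul_sub]
  rw [integral_sub hKg' (hK.mul_const c), integral_mul_const, hK1, one_mul]

theorem MeasureTheory.Integrable.sq_mul_of_eq_zero_of_one_lt_abs {K : ℝ → ℝ}
    (hK : Integrable K) (hsupp : ∀ z, 1 < |z| → K z = 0) :
    Integrable (fun z => z ^ 2 * K z) := by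
  refine hK.mono ((continuous_pow 2).aestronglyMeasurable.mul hK.1) (ae_of_all _ fun z => ?_)
  by_cases hz : |z| ≤ 1
  · rw [norm_mul, norm_pow, Real.norm_eq_abs]
    exact mul_le_of_le_one_left (norm_nonneg _) (pow_le_one₀ (abs_nonneg z) hz)
  · simp [hsupp z (not_le.1 hz)]

theorem abs_mul_sub_le_of_sub_le_sq {K f : ℝ → ℝ} {l u L h : ℝ} (hK0 : ∀ z, 0 ≤ K z)
    (hK : ∀ z, 1 < |z| → K z = 0) (hf : ∀ x ∈ Icc l u, |f u - f x| ≤ L / 2 * (u - x) ^ 2)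
    (hh0 : 0 ≤ h) (hh : h ≤ u - l) (z : ℝ) :
    |K z * (f (u - h * |z|) - f u)| ≤ L / 2 * h ^ 2 * (z ^ 2 * K z) := by
  by_cases hz : |z| ≤ 1
  · have hmem : u - h * |z| ∈ Icc l u :=
      ⟨by nlinarith [abs_nonneg z], by nlinarith [abs_nonneg z]⟩
    have := hf _ hmem
    rw [abs_mul, abs_of_nonneg (hK0 z), abs_sub_comm]
    calc K z * |f u - f (u - h * |z|)| ≤ K z * (L / 2 * (u - (u - h * |z|)) ^ 2) :=
          mul_le_mul_of_nonneg_left this (hK0 z)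
      _ = L / 2 * h ^ 2 * (z ^ 2 * K z) := by rw [sub_sub_cancel, mul_pow, sq_abs]; ring
  · simp [hK z (not_le.1 hz)]

theorem reflection_density_bias_order_two_general
    (K f f' : ℝ → ℝ) (l₀ u₀ L' : ℝ)
    (hK0 : ∀ z, 0 ≤ K z) (hKint : Integrable K)
    (hK1 : (∫ z, K z) = 1) (hKsymm : ∀ z, K (-z) = K z)
    (hKsupp : ∀ z : ℝ, 1 < |z| → K z = 0)
    (hfzero : ∀ y, y ∉ Set.Icc l₀ u₀ → f y = 0)
    (hfderiv : ∀ y ∈ Set.Icc l₀ u₀, HasDerivWithinAt f (f' y) (Set.Icc l₀ u₀) y)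
    (hLip : ∀ a ∈ Set.Icc l₀ u₀, ∀ b ∈ Set.Icc l₀ u₀, |f' a - f' b| ≤ L' * |a - b|)
    (hderiv_end : f' u₀ = 0) :
    ∀ h : ℝ, 0 < h → h < (u₀ - l₀) / 2 →
      |(∫ z, K z * ((fun y => f y + f (2 * u₀ - y) + f (2 * l₀ - y)) (u₀ - h * z)))
          - f u₀| ≤ L' * h ^ 2 * ∫ z in Set.Icc (0:ℝ) 1, z ^ 2 * K z := by
  intro h hh0 hh
  have hhlu : h < u₀ - l₀ := by linarith
  have hf_meas : Measurable f :=
    ContinuousOn.measurable_of_eq_zero_off (fun y hy => (hfderiv y hy).continuousWithinAt)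
      measurableSet_Icc hfzero
  have hD_le := abs_mul_sub_le_of_sub_le_sq hK0 hKsupp
    (fun x hx => abs_sub_le_of_lipschitz_deriv_of_deriv_eq_zero hfderiv hLip hderiv_end hx)
    hh0.le hhlu.le
  have hsq_int := hKint.sq_mul_of_eq_zero_of_one_lt_abs hKsupp
  have hD_int : Integrable (fun z => K z * (f (u₀ - h * |z|) - f u₀)) :=
    (hsq_int.const_mul _).mono' (hKint.1.mul
      ((hf_meas.comp (by fun_prop)).sub measurable_const).aestronglyMeasurable) (ae_of_all _ hD_le)
  change |(∫ z, K z * reflectedExtension f l₀ u₀ (u₀ - h * z)) - f u₀| ≤ _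
  calc _ = |∫ z, K z * (f (u₀ - h * |z|) - f u₀)| := by
        rw [integral_mul_reflectedExtension_eq hKsupp hfzero hh0 hhlu,
          integral_mul_sub_eq_of_integral_eq_one hKint hK1 hD_int]
    _ ≤ ∫ z, L' / 2 * h ^ 2 * (z ^ 2 * K z) :=
        norm_integral_le_of_norm_le (hsq_int.const_mul _)
          (ae_of_all _ fun z => (Real.norm_eq_abs _).trans_le (hD_le z))
    _ = L' * h ^ 2 * ∫ z in Icc 0 1, z ^ 2 * K z := by
        rw [integral_const_mul, integral_eq_two_mul_setIntegral_Icc_of_even (by simp [hKsymm])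
          (fun z hz => by simp [hKsupp z hz])]
        ring

/-- When the (one-sided) derivative of the density vanishes at the right
endpoint, `f'(u₀) = 0`, the boundary bias of the reflection density estimator
at `u₀` is of order `h²`: for `0 < h < (u₀ − l₀)/2`,
`|∫ K(z) g(u₀ − h z) dz − f(u₀)| ≤ L' h² ∫_{[0,1]} z² K(z) dz`, where
`g(y) = f(y) + f(2u₀ − y) + f(2l₀ − y)` is the reflected extension of `f`. -/
theorem reflection_density_bias_order_two
    (K f f' : ℝ → ℝ) (l₀ u₀ L' : ℝ) (hlu : l₀ < u₀)
    (hK0 : ∀ z, 0 ≤ K z) (hKint : Integrable K)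
    (hK1 : (∫ z, K z) = 1) (hKsymm : ∀ z, K (-z) = K z)
    (hKsupp : ∀ z : ℝ, 1 < |z| → K z = 0)
    (hfzero : ∀ y, y ∉ Set.Icc l₀ u₀ → f y = 0)
    (hfderiv : ∀ y ∈ Set.Icc l₀ u₀, HasDerivWithinAt f (f' y) (Set.Icc l₀ u₀) y)
    (hL' : 0 ≤ L')
    (hLip : ∀ a ∈ Set.Icc l₀ u₀, ∀ b ∈ Set.Icc l₀ u₀, |f' a - f' b| ≤ L' * |a - b|)
    (hderiv_end : f' u₀ = 0) :
    ∀ h : ℝ, 0 < h → h < (u₀ - l₀) / 2 →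
      |(∫ z, K z * ((fun y => f y + f (2 * u₀ - y) + f (2 * l₀ - y)) (u₀ - h * z)))
          - f u₀| ≤ L' * h ^ 2 * ∫ z in Set.Icc (0:ℝ) 1, z ^ 2 * K z :=
  reflection_density_bias_order_two_general K f f' l₀ u₀ L' hK0 hKint hK1 hKsymm hKsupp hfzero
    hfderiv hLip hderiv_end
end

section
/- Let n ≥ 2 and let x₁, …, xₙ be real numbers whose maximum m is attained by exactly one index. Then lim_{u → m⁺} [ 1 − (1/n) Σ_{i=1}^n W((xᵢ − m)/(u − m)) ] = 1 − 1/(2n). (The expression in brackets is the boundary-kernel distribution estimator F̂_u^{[BK,u]} with right support endpoint u, evaluated at the sample maximum X₍ₙ₎ = m.) -/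
/-!
As `u ↓ m`, the argument `(xᵢ - m)/(u - m)` tends to `-∞` for every non-maximal `xᵢ`, so its
`W`-term tends to `0`, while the term of the unique maximal point is constantly `W 0 = 1/2`.
-/

open Filter Topology

theorem tendsto_sub_nhdsGT_nhdsGT_zero {α : Type*} [AddCommGroup α] [LinearOrder α]
    [IsOrderedAddMonoid α] [TopologicalSpace α] [IsTopologicalAddGroup α] (m : α) :
    Tendsto (fun u => u - m) (𝓝[>] m) (𝓝[>] 0) :=
  tendsto_nhdsWithin_iff.2
    ⟨((continuous_sub_right m).tendsto' m 0 (sub_self m)).mono_left nhdsWithin_le_nhds,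
      eventually_nhdsWithin_of_forall fun _ hu => Set.mem_Ioi.2 (sub_pos.2 hu)⟩

theorem tendsto_div_sub_nhdsGT_atBot {𝕜 : Type*} [Field 𝕜] [LinearOrder 𝕜]
    [IsStrictOrderedRing 𝕜] [TopologicalSpace 𝕜] [OrderTopology 𝕜] {c : 𝕜} (hc : c < 0)
    (m : 𝕜) : Tendsto (fun u => c / (u - m)) (𝓝[>] m) atBot := by
  simpa only [div_eq_mul_inv, Function.comp_def] using
    (tendsto_inv_nhdsGT_zero.comp (tendsto_sub_nhdsGT_nhdsGT_zero m)).const_mul_atTop_of_neg hc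

theorem Filter.Tendsto.comp_div_sub_nhdsGT {𝕜 β : Type*} [Field 𝕜] [LinearOrder 𝕜]
    [IsStrictOrderedRing 𝕜] [TopologicalSpace 𝕜] [OrderTopology 𝕜] {W : 𝕜 → β} {l : Filter β}
    (hW : Tendsto W atBot l) {x m : 𝕜} (hx : x < m) :
    Tendsto (fun u => W ((x - m) / (u - m))) (𝓝[>] m) l :=
  hW.comp (tendsto_div_sub_nhdsGT_atBot (sub_neg.2 hx) m)

theorem boundary_kernel_limit_at_max_general
    (W : ℝ → ℝ)
    (hWbot : Tendsto W atBot (nhds 0)) (hW0 : W 0 = 1 / 2)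
    (n : ℕ) (xs : Fin n → ℝ) (m : ℝ)
    (hmax : ∀ i, xs i ≤ m) (hattain : ∃! i, xs i = m) :
    Tendsto (fun u => 1 - (1 / (n : ℝ)) * ∑ i, W ((xs i - m) / (u - m)))
      (nhdsWithin m (Set.Ioi m)) (nhds (1 - 1 / (2 * (n : ℝ)))) := by
  obtain ⟨i₀, hi₀, huniq⟩ := hattain
  have hterm : ∀ i, Tendsto (fun u => W ((xs i - m) / (u - m)))
      (𝓝[>] m) (𝓝 ((Pi.single i₀ (1 / 2) : Fin n → ℝ) i)) := by
    intro i
    rcases eq_or_ne i i₀ with rfl | hi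
    · simp only [Pi.single_eq_same, hi₀, sub_self, zero_div, hW0]
      exact tendsto_const_nhds
    · rw [Pi.single_eq_of_ne hi]
      exact hWbot.comp_div_sub_nhdsGT ((hmax i).lt_of_ne (mt (huniq i) hi))
  have hsum := tendsto_finsetSum Finset.univ fun i _ => hterm i
  rw [Fintype.sum_pi_single'] at hsum
  convert tendsto_const_nhds.sub (hsum.const_mul (1 / (n : ℝ))) using 2
  ring

/-- Limit of the boundary-kernel distribution estimator at the sample maximum
as the hypothesized right endpoint `u` decreases to the maximum `m`:
if the maximum is attained by exactly one index, `W(t) → 0` as `t → −∞`, and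
`W(0) = 1/2`, then `F̂_u^{[BK,u]}(m) = 1 − (1/n) Σᵢ W((xᵢ − m)/(u − m))`
tends to `1 − 1/(2n)` as `u → m⁺`. -/
theorem boundary_kernel_limit_at_max
    (W : ℝ → ℝ)
    (hWbot : Tendsto W atBot (nhds 0)) (hW0 : W 0 = 1 / 2)
    (n : ℕ) (hn : 2 ≤ n) (xs : Fin n → ℝ) (m : ℝ)
    (hmax : ∀ i, xs i ≤ m) (hattain : ∃! i, xs i = m) :
    Tendsto (fun u => 1 - (1 / (n : ℝ)) * ∑ i, W ((xs i - m) / (u - m)))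
      (nhdsWithin m (Set.Ioi m)) (nhds (1 - 1 / (2 * (n : ℝ)))) :=
  boundary_kernel_limit_at_max_general W hWbot hW0 n xs m hmax hattain
end

section
/- Let n ≥ 2 and let x₁, …, xₙ be real numbers whose maximum m is attained by exactly one index. Then there exists a unique u ∈ (m, ∞) such that 1 − (1/n) Σ_{i=1}^n W((xᵢ − m)/(u − m)) = n/(n+1). (This is the defining equation F̂_u^{[BK,u]}(X₍ₙ₎) = n/(n+1) of the proposed boundary estimator û^{[BK]} of the unknown right support endpoint; existence and uniqueness follow because the left side decreases continuously from 1 − 1/(2n) > n/(n+1) to 1/2 < n/(n+1).) -/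
/-!
As a function of `u ∈ (m, ∞)`, the left-hand side is continuous and strictly decreasing: `W` is
increasing, each `(xᵢ - m) / (u - m)` is nondecreasing in `u`, and strictly increasing for the
`xᵢ < m`, of which there is one since `n ≥ 2`. As `u ↓ m` the maximal point contributes
`W 0 = 1/2` while all other arguments tend to `-∞`, so the limit is `1 - 1/(2n)`; as `u → ∞` all
arguments tend to `0` and the limit is `1/2`. Since `1/2 < n/(n+1) < 1 - 1/(2n)` for `n ≥ 2`, the
intermediate value theorem gives a solution, and strict monotonicity makes it unique.
-/

open Filter Topology Set

theorem existsUnique_mem_Ioi_eq_of_strictAntiOn {α δ : Type*} [ConditionallyCompleteLinearOrder α]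
    [TopologicalSpace α] [OrderTopology α] [DenselyOrdered α] [NoMaxOrder α]
    [LinearOrder δ] [TopologicalSpace δ] [OrderClosedTopology δ]
    {f : α → δ} {a : α} {l₀ l₁ c : δ} (hf : ContinuousOn f (Ioi a))
    (hanti : StrictAntiOn f (Ioi a)) (h₀ : Tendsto f (𝓝[>] a) (𝓝 l₀))
    (h₁ : Tendsto f atTop (𝓝 l₁)) (hc₁ : l₁ < c) (hc₀ : c < l₀) :
    ∃! u, u ∈ Ioi a ∧ f u = c := by
  obtain ⟨v, hfv, hv⟩ := ((h₀.eventually_const_lt hc₀).and self_mem_nhdsWithin).exists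
  obtain ⟨w, hfw, hvw⟩ := ((h₁.eventually_lt_const hc₁).and (eventually_gt_atTop v)).exists
  obtain ⟨u, hu, hfu⟩ :=
    intermediate_value_Ioo' hvw.le (hf.mono fun t ht => hv.trans_le ht.1) ⟨hfw, hfv⟩
  have hua : u ∈ Ioi a := hv.trans hu.1
  exact ⟨u, ⟨hua, hfu⟩, fun u' hu' => hanti.injOn hu'.1 hua (hu'.2.trans hfu.symm)⟩

section KernelTerm

variable {W : ℝ → ℝ} {a x : ℝ}

theorem continuousOn_comp_div_sub (hW : Continuous W) :
    ContinuousOn (fun u => W ((a - x) / (u - x))) (Ioi x) :=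
  hW.comp_continuousOn <| continuousOn_const.div (by fun_prop) fun _ hu => (sub_pos.2 hu).ne'

theorem strictMonoOn_comp_div_sub (hW : StrictMono W) (ha : a < x) :
    StrictMonoOn (fun u => W ((a - x) / (u - x))) (Ioi x) := by
  intro u hu v hv huv
  apply hW
  rw [← neg_sub x a, neg_div, neg_div, neg_lt_neg_iff]
  exact div_lt_div_of_pos_left (sub_pos.2 ha) (sub_pos.2 hu) (sub_lt_sub_right huv x)

theorem monotoneOn_comp_div_sub (hW : Monotone W) (ha : a ≤ x) :
    MonotoneOn (fun u => W ((a - x) / (u - x))) (Ioi x) := by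
  intro u hu v hv huv
  apply hW
  rw [← neg_sub x a, neg_div, neg_div, neg_le_neg_iff]
  exact div_le_div_of_nonneg_left (sub_nonneg.2 ha) (sub_pos.2 hu) (sub_le_sub_right huv x)

theorem tendsto_comp_div_sub_nhdsGT {l : ℝ} (hW : Tendsto W atBot (𝓝 l)) (ha : a < x) :
    Tendsto (fun u => W ((a - x) / (u - x))) (𝓝[>] x) (𝓝 l) := by
  have hsub : Tendsto (fun u => u - x) (𝓝[>] x) (𝓝[>] 0) := by
    refine tendsto_nhdsWithin_iff.2
      ⟨?_, eventually_mem_nhdsWithin.mono fun _ hu => mem_Ioi.2 (sub_pos.2 hu)⟩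
    simpa using (tendsto_id.sub_const x).mono_left (nhdsWithin_le_nhds (a := x))
  have hinv := tendsto_inv_nhdsGT_zero.comp hsub
  exact hW.comp <| by
    simpa [div_eq_mul_inv] using hinv.const_mul_atTop_of_neg (sub_neg.2 ha)

theorem tendsto_comp_div_sub_atTop (hW : ContinuousAt W 0) :
    Tendsto (fun u => W ((a - x) / (u - x))) atTop (𝓝 (W 0)) :=
  hW.tendsto.comp <|
    tendsto_const_nhds.div_atTop (tendsto_atTop_add_const_right _ (-x) tendsto_id)

end KernelTerm

theorem exists_lt_of_existsUnique_eq {ι α : Type*} [Nontrivial ι] [PartialOrder α] {f : ι → α}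
    {m : α} (hle : ∀ i, f i ≤ m) (hattain : ∃! i, f i = m) : ∃ j, f j < m := by
  obtain ⟨i₀, -, hi₀⟩ := hattain
  obtain ⟨j, hj⟩ := exists_ne i₀
  exact ⟨j, (hle j).lt_of_ne fun h => hj (hi₀ j h)⟩

/-- Tenreiro's boundary kernel distribution estimator `F̂_u^{[BK,u]}(x)` of the sample `xs`. -/
noncomputable def boundaryKernelCDF (W : ℝ → ℝ) {n : ℕ} (xs : Fin n → ℝ) (u x : ℝ) : ℝ :=
  1 - (1 / (n : ℝ)) * ∑ i, W ((xs i - x) / (u - x))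

section BoundaryKernelCDF

variable {W : ℝ → ℝ} {n : ℕ} {xs : Fin n → ℝ} {x : ℝ}

theorem continuousOn_boundaryKernelCDF (hW : Continuous W) :
    ContinuousOn (fun u => boundaryKernelCDF W xs u x) (Ioi x) :=
  continuousOn_const.sub <| continuousOn_const.mul <|
    continuousOn_finsetSum _ fun _ _ => continuousOn_comp_div_sub hW

theorem strictAntiOn_boundaryKernelCDF (hW : StrictMono W) (hle : ∀ i, xs i ≤ x)
    (hlt : ∃ j, xs j < x) : StrictAntiOn (fun u => boundaryKernelCDF W xs u x) (Ioi x) := by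
  obtain ⟨j, hj⟩ := hlt
  have hn : (0 : ℝ) < n := Nat.cast_pos.2 (Fin.pos j)
  intro u hu v hv huv
  have hsum : ∑ i, W ((xs i - x) / (u - x)) < ∑ i, W ((xs i - x) / (v - x)) :=
    Finset.sum_lt_sum (fun i _ => monotoneOn_comp_div_sub hW.monotone (hle i) hu hv huv.le)
      ⟨j, Finset.mem_univ j, strictMonoOn_comp_div_sub hW hj hu hv huv⟩
  exact sub_lt_sub_left (mul_lt_mul_of_pos_left hsum (one_div_pos.2 hn)) 1

theorem tendsto_boundaryKernelCDF_nhdsGT (hW : Tendsto W atBot (𝓝 0)) (hle : ∀ i, xs i ≤ x)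
    (hattain : ∃! i, xs i = x) :
    Tendsto (fun u => boundaryKernelCDF W xs u x) (𝓝[>] x) (𝓝 (1 - 1 / (n : ℝ) * W 0)) := by
  obtain ⟨i₀, hi₀, hi₀u⟩ := hattain
  have hterm : ∀ i, Tendsto (fun u => W ((xs i - x) / (u - x))) (𝓝[>] x)
      (𝓝 (if i = i₀ then W 0 else 0)) := by
    intro i
    rcases eq_or_ne i i₀ with rfl | hi
    · simp [hi₀]
    · rw [if_neg hi]
      exact tendsto_comp_div_sub_nhdsGT hW <| (hle i).lt_of_ne fun h => hi (hi₀u i h)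
  have hsum := tendsto_finsetSum Finset.univ fun i _ => hterm i
  rw [Finset.sum_ite_eq' Finset.univ i₀, if_pos (Finset.mem_univ i₀)] at hsum
  exact tendsto_const_nhds.sub (tendsto_const_nhds.mul hsum)

theorem tendsto_boundaryKernelCDF_atTop (hW : ContinuousAt W 0) (hn : n ≠ 0) :
    Tendsto (fun u => boundaryKernelCDF W xs u x) atTop (𝓝 (1 - W 0)) := by
  have hsum := tendsto_finsetSum Finset.univ fun i _ =>
    tendsto_comp_div_sub_atTop (a := xs i) (x := x) hW
  rw [Finset.sum_const, Finset.card_univ, Fintype.card_fin, nsmul_eq_mul] at hsum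
  have hlim := (tendsto_const_nhds (x := (1 : ℝ))).sub
    ((tendsto_const_nhds (x := 1 / (n : ℝ))).mul hsum)
  have hcancel : 1 / (n : ℝ) * (n * W 0) = W 0 := by field_simp
  rwa [hcancel] at hlim

end BoundaryKernelCDF

/-- Existence and uniqueness of the proposed boundary estimator `û^{[BK]}` of
the unknown right support endpoint: if `W` is continuous, strictly increasing,
with `W(t) → 0` as `t → −∞` and `W(0) = 1/2`, `n ≥ 2`, and the maximum `m` of
`x₁, …, xₙ` is attained by exactly one index, then there is a unique
`u ∈ (m, ∞)` solving the estimating equation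
`1 − (1/n) Σᵢ W((xᵢ − m)/(u − m)) = n/(n+1)`. -/
theorem boundary_kernel_estimator_exists_unique
    (W : ℝ → ℝ) (hWcont : Continuous W) (hWmono : StrictMono W)
    (hWbot : Tendsto W atBot (nhds 0)) (hW0 : W 0 = 1 / 2)
    (n : ℕ) (hn : 2 ≤ n) (xs : Fin n → ℝ) (m : ℝ)
    (hmax : ∀ i, xs i ≤ m) (hattain : ∃! i, xs i = m) :
    ∃! u : ℝ, u ∈ Set.Ioi m ∧
      1 - (1 / (n : ℝ)) * ∑ i, W ((xs i - m) / (u - m)) = (n : ℝ) / ((n : ℝ) + 1) := by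
  have : Nontrivial (Fin n) := Fin.nontrivial_iff_two_le.2 hn
  have hn' : (2 : ℝ) ≤ n := by exact_mod_cast hn
  refine existsUnique_mem_Ioi_eq_of_strictAntiOn (f := fun u => boundaryKernelCDF W xs u m)
    (continuousOn_boundaryKernelCDF hWcont)
    (strictAntiOn_boundaryKernelCDF hWmono hmax (exists_lt_of_existsUnique_eq hmax hattain))
    (tendsto_boundaryKernelCDF_nhdsGT hWbot hmax hattain)
    (tendsto_boundaryKernelCDF_atTop hWcont.continuousAt (by omega)) ?_ ?_
  · rw [hW0, lt_div_iff₀ (by linarith)]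
    linarith
  · rw [hW0, div_lt_iff₀ (by linarith)]
    field_simp
    nlinarith
end

section
/- Let n ≥ 2 and let x₁, …, xₙ be real numbers whose minimum m₁ is attained by exactly one index. Then the map φ(l) := (1/n) Σ_{i=1}^n W((m₁ − xᵢ)/(m₁ − l)) is strictly decreasing on (−∞, m₁), with lim_{l→−∞} φ(l) = 1/2 and lim_{l→m₁⁻} φ(l) = 1/(2n), and there exists a unique l ∈ (−∞, m₁) such that φ(l) = 1/(n+1). (φ(l) is the boundary-kernel distribution estimator F̂_l^{[BK,l]} with left support endpoint l, evaluated at the sample minimum X₍₁₎ = m₁; the equation φ(l) = 1/(n+1) defines the proposed estimator of the unknown left support endpoint.) -/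
open MeasureTheory Filter Topology

/-- The boundary-kernel distribution estimator at the sample minimum, as a
function `φ(l) = (1/n) Σᵢ W((m₁ − xᵢ)/(m₁ − l))` of the hypothesized left
support endpoint `l`, is strictly decreasing on `(−∞, m₁)`, tends to `1/2` as
`l → −∞`, tends to `1/(2n)` as `l → m₁⁻`, and the estimating equation
`φ(l) = 1/(n+1)` has a unique solution `l ∈ (−∞, m₁)`. -/
theorem boundary_kernel_left_estimator
    (W : ℝ → ℝ) (hWcont : Continuous W) (hWmono : StrictMono W)
    (hWbot : Tendsto W atBot (nhds 0)) (hW0 : W 0 = 1 / 2)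
    (n : ℕ) (hn : 2 ≤ n) (xs : Fin n → ℝ) (m₁ : ℝ)
    (hmin : ∀ i, m₁ ≤ xs i) (hattain : ∃! i, xs i = m₁) :
    StrictAntiOn (fun l => (1 / (n : ℝ)) * ∑ i, W ((m₁ - xs i) / (m₁ - l)))
        (Set.Iio m₁) ∧
      Tendsto (fun l => (1 / (n : ℝ)) * ∑ i, W ((m₁ - xs i) / (m₁ - l)))
        atBot (nhds (1 / 2)) ∧
      Tendsto (fun l => (1 / (n : ℝ)) * ∑ i, W ((m₁ - xs i) / (m₁ - l)))
        (nhdsWithin m₁ (Set.Iio m₁)) (nhds (1 / (2 * (n : ℝ)))) ∧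
      ∃! l : ℝ, l ∈ Set.Iio m₁ ∧
        (1 / (n : ℝ)) * ∑ i, W ((m₁ - xs i) / (m₁ - l)) = 1 / ((n : ℝ) + 1) := by
  obtain ⟨i₀, hi₀, huniq⟩ := hattain
  have npos : (0 : ℝ) < n := by positivity
  set φ : ℝ → ℝ := fun l => (1 / (n : ℝ)) * ∑ i, W ((m₁ - xs i) / (m₁ - l)) with hφ
  -- an index with strictly larger value
  haveI : Nontrivial (Fin n) := Fin.nontrivial_iff_two_le.mpr hn
  obtain ⟨j, hj⟩ := exists_ne i₀
  have hxj : m₁ < xs j := lt_of_le_of_ne (hmin j) (fun h => hj (huniq j h.symm))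
  -- strict antitonicity
  have hanti : StrictAntiOn φ (Set.Iio m₁) := by
    intro a ha b hb hab
    have hda : 0 < m₁ - a := by simpa using sub_pos.mpr (Set.mem_Iio.mp ha)
    have hdb : 0 < m₁ - b := by simpa using sub_pos.mpr (Set.mem_Iio.mp hb)
    have hsum : (∑ i, W ((m₁ - xs i) / (m₁ - b))) < ∑ i, W ((m₁ - xs i) / (m₁ - a)) := by
      apply Finset.sum_lt_sum
      · intro i _
        apply hWmono.monotone
        rw [div_le_div_iff₀ hdb hda]
        have := hmin i
        nlinarith
      · refine ⟨j, Finset.mem_univ j, ?_⟩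
        apply hWmono
        rw [div_lt_div_iff₀ hdb hda]
        nlinarith
    exact mul_lt_mul_of_pos_left hsum (by positivity)
  refine ⟨hanti, ?_, ?_, ?_⟩
  case _ =>
    -- limit at -∞
    have hterm : ∀ i : Fin n,
        Tendsto (fun l => W ((m₁ - xs i) / (m₁ - l))) atBot (nhds (1 / 2)) := by
      intro i
      have hden : Tendsto (fun l : ℝ => m₁ - l) atBot atTop := by
        simpa [sub_eq_add_neg] using
          tendsto_atTop_add_const_left atBot m₁ (tendsto_neg_atBot_atTop)
      have harg : Tendsto (fun l => (m₁ - xs i) / (m₁ - l)) atBot (nhds 0) :=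
        Tendsto.div_atTop tendsto_const_nhds hden
      have := (hWcont.tendsto 0).comp harg
      rwa [hW0] at this
    have hsum := tendsto_finset_sum (Finset.univ : Finset (Fin n)) (fun i _ => hterm i)
    have := (tendsto_const_nhds (x := (1 / (n : ℝ)))).mul hsum
    convert this using 2
    rw [Finset.sum_const]
    simp only [Finset.card_univ, Fintype.card_fin, nsmul_eq_mul]
    field_simp
  case _ =>
    -- limit at m₁⁻
    have hden : Tendsto (fun l : ℝ => m₁ - l) (nhdsWithin m₁ (Set.Iio m₁))
        (nhdsWithin 0 (Set.Ioi 0)) := by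
      apply tendsto_nhdsWithin_of_tendsto_nhds_of_eventually_within
      · have : Tendsto (fun l : ℝ => m₁ - l) (nhds m₁) (nhds (m₁ - m₁)) :=
          (tendsto_const_nhds.sub tendsto_id)
        simpa using this.mono_left nhdsWithin_le_nhds
      · filter_upwards [self_mem_nhdsWithin] with l hl
        exact sub_pos.mpr (Set.mem_Iio.mp hl)
    have hterm : ∀ i : Fin n,
        Tendsto (fun l => W ((m₁ - xs i) / (m₁ - l))) (nhdsWithin m₁ (Set.Iio m₁))
          (nhds (if xs i = m₁ then (1 / 2 : ℝ) else 0)) := by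
      intro i
      by_cases h : xs i = m₁
      · simp only [h, if_pos, sub_self, zero_div]
        rw [hW0]
        simpa [h] using (tendsto_const_nhds : Tendsto (fun _ : ℝ => W 0)
          (nhdsWithin m₁ (Set.Iio m₁)) (nhds (W 0))).congr
          (by intro l; simp) |>.congr (fun l => by rw [hW0])
      · have hx : m₁ < xs i := lt_of_le_of_ne (hmin i) (fun e => h e.symm)
        have hc : m₁ - xs i < 0 := by linarith
        have hinv : Tendsto (fun l : ℝ => (m₁ - l)⁻¹) (nhdsWithin m₁ (Set.Iio m₁)) atTop :=
          tendsto_inv_nhdsGT_zero.comp hden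
        have harg : Tendsto (fun l => (m₁ - xs i) / (m₁ - l))
            (nhdsWithin m₁ (Set.Iio m₁)) atBot := by
          simp only [div_eq_mul_inv]
          exact (tendsto_const_mul_atBot_of_neg hc).mpr hinv
        rw [if_neg h]
        exact hWbot.comp harg
    have hsum := tendsto_finset_sum (Finset.univ : Finset (Fin n)) (fun i _ => hterm i)
    have hval : (∑ i, (if xs i = m₁ then (1 / 2 : ℝ) else 0)) = 1 / 2 := by
      rw [Finset.sum_eq_single i₀]
      · simp [hi₀]
      · intro j _ hjne
        rw [if_neg (fun h => hjne (huniq j h))]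
      · intro h; exact absurd (Finset.mem_univ i₀) h
    rw [hval] at hsum
    have := (tendsto_const_nhds (x := (1 / (n : ℝ)))).mul hsum
    convert this using 2
    field_simp
  case _ =>
    -- limits again (re-derive, simpler: reuse)
    have h1 : Tendsto φ atBot (nhds (1 / 2)) := by
      have hterm : ∀ i : Fin n,
          Tendsto (fun l => W ((m₁ - xs i) / (m₁ - l))) atBot (nhds (1 / 2)) := by
        intro i
        have hden : Tendsto (fun l : ℝ => m₁ - l) atBot atTop := by
          simpa [sub_eq_add_neg] using
            tendsto_atTop_add_const_left atBot m₁ (tendsto_neg_atBot_atTop)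
        have harg : Tendsto (fun l => (m₁ - xs i) / (m₁ - l)) atBot (nhds 0) :=
          Tendsto.div_atTop tendsto_const_nhds hden
        have := (hWcont.tendsto 0).comp harg
        rwa [hW0] at this
      have hsum := tendsto_finset_sum (Finset.univ : Finset (Fin n)) (fun i _ => hterm i)
      have := (tendsto_const_nhds (x := (1 / (n : ℝ)))).mul hsum
      convert this using 2
      rw [Finset.sum_const]
      simp only [Finset.card_univ, Fintype.card_fin, nsmul_eq_mul]
      field_simp
    have h2 : Tendsto φ (nhdsWithin m₁ (Set.Iio m₁)) (nhds (1 / (2 * (n : ℝ)))) := by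
      have hden : Tendsto (fun l : ℝ => m₁ - l) (nhdsWithin m₁ (Set.Iio m₁))
          (nhdsWithin 0 (Set.Ioi 0)) := by
        apply tendsto_nhdsWithin_of_tendsto_nhds_of_eventually_within
        · have : Tendsto (fun l : ℝ => m₁ - l) (nhds m₁) (nhds (m₁ - m₁)) :=
            (tendsto_const_nhds.sub tendsto_id)
          simpa using this.mono_left nhdsWithin_le_nhds
        · filter_upwards [self_mem_nhdsWithin] with l hl
          exact sub_pos.mpr (Set.mem_Iio.mp hl)
      have hterm : ∀ i : Fin n,
          Tendsto (fun l => W ((m₁ - xs i) / (m₁ - l))) (nhdsWithin m₁ (Set.Iio m₁))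
            (nhds (if xs i = m₁ then (1 / 2 : ℝ) else 0)) := by
        intro i
        by_cases h : xs i = m₁
        · simp only [h, if_pos, sub_self, zero_div]
          rw [hW0]
          simpa [h] using (tendsto_const_nhds : Tendsto (fun _ : ℝ => W 0)
            (nhdsWithin m₁ (Set.Iio m₁)) (nhds (W 0))).congr
            (by intro l; simp) |>.congr (fun l => by rw [hW0])
        · have hx : m₁ < xs i := lt_of_le_of_ne (hmin i) (fun e => h e.symm)
          have hc : m₁ - xs i < 0 := by linarith
          have hinv : Tendsto (fun l : ℝ => (m₁ - l)⁻¹) (nhdsWithin m₁ (Set.Iio m₁)) atTop :=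
            tendsto_inv_nhdsGT_zero.comp hden
          have harg : Tendsto (fun l => (m₁ - xs i) / (m₁ - l))
              (nhdsWithin m₁ (Set.Iio m₁)) atBot := by
            simp only [div_eq_mul_inv]
            exact (tendsto_const_mul_atBot_of_neg hc).mpr hinv
          rw [if_neg h]
          exact hWbot.comp harg
      have hsum := tendsto_finset_sum (Finset.univ : Finset (Fin n)) (fun i _ => hterm i)
      have hval : (∑ i, (if xs i = m₁ then (1 / 2 : ℝ) else 0)) = 1 / 2 := by
        rw [Finset.sum_eq_single i₀]
        · simp [hi₀]
        · intro j _ hjne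
          rw [if_neg (fun h => hjne (huniq j h))]
        · intro h; exact absurd (Finset.mem_univ i₀) h
      rw [hval] at hsum
      have := (tendsto_const_nhds (x := (1 / (n : ℝ)))).mul hsum
      convert this using 2
      field_simp
    set c : ℝ := 1 / ((n : ℝ) + 1) with hc
    have hclt : c < 1 / 2 := by
      rw [hc, div_lt_div_iff₀ (by positivity) (by norm_num)]
      have : (2 : ℝ) ≤ n := by exact_mod_cast hn
      linarith
    have hcgt : 1 / (2 * (n : ℝ)) < c := by
      rw [hc, div_lt_div_iff₀ (by positivity) (by positivity)]
      have : (2 : ℝ) ≤ n := by exact_mod_cast hn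
      linarith
    -- find b near m₁ with φ b < c
    have hev2 : ∀ᶠ l in nhdsWithin m₁ (Set.Iio m₁), φ l < c ∧ l ∈ Set.Iio m₁ := by
      filter_upwards [h2.eventually_lt_const hcgt, self_mem_nhdsWithin] with l h1 h2
      exact ⟨h1, h2⟩
    obtain ⟨b, hbφ, hbm⟩ := hev2.exists
    -- find a < b with φ a > c
    obtain ⟨a₀, ha₀⟩ := eventually_atBot.mp (h1.eventually_const_lt hclt)
    set a : ℝ := min a₀ (b - 1) with ha
    have haφ : c < φ a := ha₀ a (min_le_left _ _)
    have hab : a < b := lt_of_le_of_lt (min_le_right _ _) (by linarith)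
    have ham : a ∈ Set.Iio m₁ := lt_trans hab hbm
    have hcont : ContinuousOn φ (Set.Icc a b) := by
      apply ContinuousOn.mul continuousOn_const
      apply continuousOn_finset_sum
      intro i _
      apply hWcont.comp_continuousOn
      apply ContinuousOn.div continuousOn_const
      · exact (continuousOn_const.sub continuousOn_id)
      · intro l hl
        have : l < m₁ := lt_of_le_of_lt hl.2 hbm
        exact sub_ne_zero.mpr (ne_of_gt this)
    have hmem : c ∈ Set.Ioo (φ b) (φ a) := ⟨hbφ, haφ⟩
    obtain ⟨l, hlmem, hlval⟩ := intermediate_value_Ioo' (le_of_lt hab) hcont hmem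
    refine ⟨l, ⟨lt_trans hlmem.2 hbm, hlval⟩, ?_⟩
    rintro l' ⟨hl'm, hl'val⟩
    exact hanti.injOn hl'm (lt_trans hlmem.2 hbm) (hl'val.trans hlval.symm)
end

section
/- Fix h > 0, a real number l₀, and real sample points x₁, …, xₙ with maximum m, such that l₀ ≤ xᵢ for all i. Then the map u ↦ F̂_u^{[R]}(m) is nonincreasing on [m, ∞). (That is, the reflection distribution estimator evaluated at the sample maximum is a decreasing function of the hypothesized right support endpoint u on [X₍ₙ₎, ∞).) -/
open MeasureTheory Filter Topology

private lemma window_mono (K : ℝ → ℝ) (hKint : Integrable K)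
    (monoK : MonotoneOn K (Set.Iic 0)) (c : ℝ) (hc : 0 ≤ c)
    {t₁ t₂ : ℝ} (h21 : t₂ ≤ t₁) (h10 : t₁ ≤ 0) :
    (∫ s in Set.Iic t₂, K s) - (∫ s in Set.Iic (t₂ - c), K s)
      ≤ (∫ s in Set.Iic t₁, K s) - (∫ s in Set.Iic (t₁ - c), K s) := by
  have hi : ∀ a : ℝ, IntegrableOn K (Set.Iic a) := fun a => hKint.integrableOn
  rw [intervalIntegral.integral_Iic_sub_Iic (hi _) (hi _),
      intervalIntegral.integral_Iic_sub_Iic (hi _) (hi _)]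
  set d := t₁ - t₂ with hd
  have hsub : (∫ x in t₂ - c..t₂, K x) = ∫ x in (t₁ - c)..t₁, K (x - d) := by
    rw [intervalIntegral.integral_comp_sub_right (fun x => K x) d]
    congr 1 <;> ring
  rw [hsub]
  have hab : t₁ - c ≤ t₁ := by linarith
  refine intervalIntegral.integral_mono_on hab ?_ ?_ ?_
  · exact (hKint.comp_sub_right d).intervalIntegrable
  · exact hKint.intervalIntegrable
  · intro x hx
    rw [Set.mem_Icc] at hx
    have hx0 : x ≤ 0 := le_trans hx.2 h10
    exact monoK (by simp only [Set.mem_Iic]; linarith) (Set.mem_Iic.2 hx0) (by linarith)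

/-- Monotonicity of the reflection distribution estimator at the sample maximum
in the hypothesized right support endpoint: for a symmetric unimodal kernel
density `K` with integral `W`, and sample points in `[l₀, ∞)` with maximum `m`,
the map `u ↦ F̂_u^{[R]}(m)` is nonincreasing on `[m, ∞)`. -/
theorem reflection_estimator_antitone
    (K W : ℝ → ℝ)
    (hK0 : ∀ z, 0 ≤ K z) (hKint : Integrable K)
    (hK1 : (∫ z, K z) = 1) (hKsymm : ∀ z, K (-z) = K z)
    (hKuni : AntitoneOn K (Set.Ici 0))
    (hW : ∀ t, W t = ∫ s in Set.Iic t, K s)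
    (n : ℕ) (hn : 0 < n) (xs : Fin n → ℝ) (m l₀ h : ℝ) (hh : 0 < h)
    (hl : ∀ i, l₀ ≤ xs i) (hmax : ∀ i, xs i ≤ m) (hattain : ∃ i, xs i = m) :
    AntitoneOn
      (fun u => (1 / (n : ℝ)) *
          ∑ i, (W ((m - xs i) / h) + W ((m + xs i - 2 * u) / h)
            + W ((m + xs i - 2 * l₀) / h) - W ((xs i + l₀ - 2 * u) / h)) - 1)
      (Set.Ici m) := by
  have monoK : MonotoneOn K (Set.Iic 0) := by
    intro a ha b hb hab
    have := hKuni (Set.mem_Ici.2 (neg_nonneg.2 hb)) (Set.mem_Ici.2 (neg_nonneg.2 ha))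
      (neg_le_neg hab)
    rwa [hKsymm, hKsymm] at this
  intro u₁ hu₁ u₂ hu₂ h12
  dsimp only
  have hsum : ∀ i : Fin n,
      (W ((m - xs i) / h) + W ((m + xs i - 2 * u₂) / h)
        + W ((m + xs i - 2 * l₀) / h) - W ((xs i + l₀ - 2 * u₂) / h))
      ≤ (W ((m - xs i) / h) + W ((m + xs i - 2 * u₁) / h)
        + W ((m + xs i - 2 * l₀) / h) - W ((xs i + l₀ - 2 * u₁) / h)) := by
    intro i
    have hc : 0 ≤ (m - l₀) / h := div_nonneg (by linarith [hl i, hmax i]) hh.le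
    have key := window_mono K hKint monoK ((m - l₀) / h) hc
      (t₁ := (m + xs i - 2 * u₁) / h) (t₂ := (m + xs i - 2 * u₂) / h)
      (by apply div_le_div_of_nonneg_right _ hh.le; linarith)
      (by
        apply div_nonpos_of_nonpos_of_nonneg _ hh.le
        have := hmax i; have := hu₁; rw [Set.mem_Ici] at this; linarith)
    have e1 : (m + xs i - 2 * u₂) / h - (m - l₀) / h = (xs i + l₀ - 2 * u₂) / h := by
      field_simp; ring
    have e2 : (m + xs i - 2 * u₁) / h - (m - l₀) / h = (xs i + l₀ - 2 * u₁) / h := by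
      field_simp; ring
    rw [e1, e2] at key
    rw [hW, hW, hW, hW, hW, hW]
    linarith
  have hn' : (0:ℝ) ≤ 1 / (n : ℝ) := by positivity
  have hS : (∑ i, (W ((m - xs i) / h) + W ((m + xs i - 2 * u₂) / h)
        + W ((m + xs i - 2 * l₀) / h) - W ((xs i + l₀ - 2 * u₂) / h)))
      ≤ ∑ i, (W ((m - xs i) / h) + W ((m + xs i - 2 * u₁) / h)
        + W ((m + xs i - 2 * l₀) / h) - W ((xs i + l₀ - 2 * u₁) / h)) :=
    Finset.sum_le_sum fun i _ => hsum i
  have := mul_le_mul_of_nonneg_left hS hn'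
  linarith
end

section
/- Let (hₙ) be a sequence of positive reals with hₙ → 0 and n·hₙ → ∞. Then √n · hₙ · P( u₀ − max_{1 ≤ i ≤ n} Xᵢ > hₙ ) → 0 as n → ∞; that is, P(|X₍ₙ₎ − u₀| > hₙ) = o((√n·hₙ)^{−1}), the tail bound used to justify replacing the boundary-kernel estimating equation by its version at the true boundary. -/
open MeasureTheory Filter Topology ProbabilityTheory

/-!
The event `max_{i<n} Xᵢ < u₀ - hₙ` has probability `pₙⁿ`, where
`pₙ = P(X₀ < u₀ - hₙ) ≤ F(u₀ - hₙ)`. Since `F(u₀) = 1` and `F` has left derivative `c > 0`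
at `u₀`, eventually `pₙ ≤ 1 - (c/2) hₙ`, so `pₙⁿ ≤ exp(-(c/2) n hₙ)`. Hence
`√n hₙ pₙⁿ ≤ t exp(-(c/2) t)` with `t = n hₙ → ∞`, which tends to `0`.
-/

lemma ProbabilityTheory.iIndepFun.measure_forall_lt_mem_eq_pow {Ω β : Type*}
    [MeasurableSpace Ω] [MeasurableSpace β] {μ : Measure Ω} {X : ℕ → Ω → β}
    (hXmeas : ∀ i, Measurable (X i)) (hindep : iIndepFun X μ)
    (hident : ∀ i, μ.map (X i) = μ.map (X 0)) {S : Set β} (hS : MeasurableSet S) (n : ℕ) :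
    μ {ω | ∀ i < n, X i ω ∈ S} = μ (X 0 ⁻¹' S) ^ n := by
  have hset : {ω | ∀ i < n, X i ω ∈ S} = ⋂ i ∈ Finset.range n, X i ⁻¹' S := by
    ext ω
    simp
  have hid (i : ℕ) : μ (X i ⁻¹' S) = μ (X 0 ⁻¹' S) := by
    rw [← Measure.map_apply (hXmeas i) hS, hident i, Measure.map_apply (hXmeas 0) hS]
  rw [hset, hindep.meas_biInter fun i _ => ⟨S, hS, rfl⟩]
  simp [hid]

lemma eventually_le_sub_mul_of_tendsto_slope {α : Type*} {l : Filter α} {F : ℝ → ℝ}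
    {u₀ c b : ℝ} (hderiv : Tendsto (fun s => (F u₀ - F (u₀ - s)) / s) (𝓝[>] 0) (𝓝 c))
    (hb : b < c) {h : α → ℝ} (hh : Tendsto h l (𝓝[>] 0)) :
    ∀ᶠ x in l, F (u₀ - h x) ≤ F u₀ - b * h x := by
  filter_upwards [(hderiv.comp hh).eventually (eventually_gt_nhds hb),
    hh self_mem_nhdsWithin] with x hslope hpos
  have := (lt_div_iff₀ hpos).mp hslope
  linarith

lemma tendsto_sqrt_mul_mul_pow_of_le_one_sub {p h : ℕ → ℝ} {b : ℝ} (hb : 0 < b)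
    (hp : ∀ n, 0 ≤ p n) (hh : ∀ n, 0 ≤ h n) (hle : ∀ᶠ n in atTop, p n ≤ 1 - b * h n)
    (hnh : Tendsto (fun n : ℕ => (n : ℝ) * h n) atTop atTop) :
    Tendsto (fun n : ℕ => √n * h n * p n ^ n) atTop (𝓝 0) := by
  have hdecay : Tendsto (fun n : ℕ => n * h n * Real.exp (-b * (n * h n))) atTop (𝓝 0) := by
    simpa [Function.comp_def] using (tendsto_rpow_mul_exp_neg_mul_atTop_nhds_zero 1 b hb).comp hnh
  refine squeeze_zero' (.of_forall fun n => ?_) ?_ hdecay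
  · exact mul_nonneg (mul_nonneg (Real.sqrt_nonneg _) (hh n)) (pow_nonneg (hp n) n)
  filter_upwards [hle] with n hn
  have hpow : p n ^ n ≤ Real.exp (-b * (n * h n)) := calc
    p n ^ n ≤ Real.exp (-(b * h n)) ^ n :=
      pow_le_pow_left₀ (hp n) (hn.trans (Real.one_sub_le_exp_neg _)) n
    _ = Real.exp (-b * (n * h n)) := by rw [← Real.exp_nat_mul]; ring_nf
  have hsqrt : √(n : ℝ) ≤ n :=
    Real.sqrt_le_self_iff.mpr (n.eq_zero_or_pos.imp (by exact_mod_cast ·) (by exact_mod_cast ·))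
  exact mul_le_mul (mul_le_mul_of_nonneg_right hsqrt (hh n)) hpow (pow_nonneg (hp n) n)
    (mul_nonneg n.cast_nonneg (hh n))

/-- Tail bound for the sample maximum at bandwidth scale: for i.i.d.
`X₁, X₂, …` with c.d.f. `F` satisfying `F(u₀) = 1` and having left derivative
`c > 0` at `u₀`, and bandwidths `hₙ > 0` with `hₙ → 0` and `n hₙ → ∞`,
`P(u₀ − max_{1 ≤ i ≤ n} Xᵢ > hₙ) = o((√n hₙ)^{−1})`, i.e.
`√n hₙ P(u₀ − max_{1 ≤ i ≤ n} Xᵢ > hₙ) → 0`. -/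
theorem sample_max_tail_bound
    {Ω : Type*} [MeasurableSpace Ω] (μ : Measure Ω) [IsProbabilityMeasure μ]
    (X : ℕ → Ω → ℝ) (hXmeas : ∀ i, Measurable (X i))
    (hindep : iIndepFun X μ)
    (hident : ∀ i, Measure.map (X i) μ = Measure.map (X 0) μ)
    (F : ℝ → ℝ) (hF : ∀ t, F t = (μ {ω | X 0 ω ≤ t}).toReal)
    (u₀ c : ℝ) (hF1 : F u₀ = 1) (hc : 0 < c)
    (hderiv : Tendsto (fun s => (F u₀ - F (u₀ - s)) / s)
      (nhdsWithin 0 (Set.Ioi 0)) (nhds c))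
    (h : ℕ → ℝ) (hpos : ∀ n, 0 < h n)
    (hto0 : Tendsto h atTop (nhds 0))
    (hnh : Tendsto (fun n : ℕ => (n : ℝ) * h n) atTop atTop) :
    Tendsto
      (fun n : ℕ => Real.sqrt n * h n *
        (μ {ω | ∀ i < n, X i ω < u₀ - h n}).toReal)
      atTop (nhds 0) := by
  set p : ℕ → ℝ := fun n => (μ {ω | X 0 ω < u₀ - h n}).toReal
  have hprob (n : ℕ) : (μ {ω | ∀ i < n, X i ω < u₀ - h n}).toReal = p n ^ n :=
    (congrArg ENNReal.toReal (hindep.measure_forall_lt_mem_eq_pow hXmeas hident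
      measurableSet_Iio n)).trans (ENNReal.toReal_pow _ _)
  have hp_le_F (n : ℕ) : p n ≤ F (u₀ - h n) := by
    rw [hF]
    exact ENNReal.toReal_mono (measure_ne_top μ _)
      (measure_mono (Set.ofPred_subset_ofPred.mpr fun _ hω => hω.le))
  have hh : Tendsto h atTop (𝓝[>] 0) :=
    tendsto_nhdsWithin_of_tendsto_nhds_of_eventually_within _ hto0 (.of_forall hpos)
  have hp_le : ∀ᶠ n in atTop, p n ≤ 1 - c / 2 * h n := by
    filter_upwards [eventually_le_sub_mul_of_tendsto_slope hderiv (half_lt_self hc) hh]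
      with n hn
    linarith [hp_le_F n, hF1]
  simp_rw [hprob]
  exact tendsto_sqrt_mul_mul_pow_of_le_one_sub (half_pos hc) (fun _ => ENNReal.toReal_nonneg)
    (fun n => (hpos n).le) hp_le hnh
end
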